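/- arXiv:2205.12077 — 6 statements merged into one kernel-verified Lean document; each statement's English description precedes it below -/
import Mathlib

section
/- For every fixed τ > 0 and every choice of parameters δ > 0, ρ > 0, P > 0, λ ≥ 0, the function β ↦ D(β,τ) is strictly concave on (0, ∞). -/
open MeasureTheory ProbabilityTheory Filter

noncomputable section

/-- Standard Gaussian `N(0,1)` measure on `ℝ`. -/
def stdGaussian : Measure ℝ := ProbabilityTheory.gaussianReal 0 1

/-- `Yfun P lam β τ = (β/α)·(E[(H − √P·α)²·1{H ≥ √P·α}] − 1/2)` with `α = 1/τ + 2λ/β`. -/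
def Yfun (P lam β τ : ℝ) : ℝ :=
  (β / (1 / τ + 2 * lam / β)) *
    ((∫ h in Set.Ici (Real.sqrt P * (1 / τ + 2 * lam / β)),
        (h - Real.sqrt P * (1 / τ + 2 * lam / β)) ^ 2 ∂stdGaussian) - 1 / 2)

/-- `D(β,τ) = τβδ/2 + ρβ/(2τ) − β²/4 + Y(β,τ)`, with the convention `D(0,τ) = 0`. -/
def Dfun (δ ρ P lam β τ : ℝ) : ℝ :=
  if β = 0 then 0
  else τ * β * δ / 2 + ρ * β / (2 * τ) - β ^ 2 / 4 + Yfun P lam β τ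

/-- `(βs, τs)` is a saddle point of `max_{β ≥ 0} min_{τ > 0} D(β, τ)`:
`D(β,τs) ≤ D(βs,τs) ≤ D(βs,τ)` for all `β ≥ 0` and `τ > 0`. -/
def IsSaddle (δ ρ P lam βs τs : ℝ) : Prop :=
  0 ≤ βs ∧ 0 < τs ∧
  (∀ β, 0 ≤ β → Dfun δ ρ P lam β τs ≤ Dfun δ ρ P lam βs τs) ∧
  (∀ τ, 0 < τ → Dfun δ ρ P lam βs τs ≤ Dfun δ ρ P lam βs τ)

end

/-!
With `F a = E[(H - a)₊²] = (1 + a²) Q a - a φ a` (`Q` the Gaussian tail), the Gaussian term is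
`Y β = β g (1/τ + 2λ/β)` for `g x = (F (√P x) - 1/2) / x`. One computes
`g'' x = (2 Q t + 2 t φ t - 1) / x³` with `t = √P x`; the numerator vanishes at `t = 0` and has
derivative `-2 t² φ t`, so `g` is concave on `(0, ∞)`. The map `β ↦ β g (c + d/β)` is a
perspective of `u ↦ g (c + u)`, hence concave for `d ≥ 0`, and `D` is this plus an affine
function minus `β²/4`.
-/

open Real Set Topology

local notation "φ" => gaussianPDFReal 0 1

lemma gaussianPDFReal_zero_one (x : ℝ) : φ x = (√(2 * π))⁻¹ * exp (-(x ^ 2 / 2)) := by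
  simp [gaussianPDFReal, neg_div]

lemma hasDerivAt_gaussianPDFReal_zero_one (x : ℝ) : HasDerivAt φ (-x * φ x) x := by
  rw [show φ = fun y => (√(2 * π))⁻¹ * exp (-(y ^ 2 / 2)) from funext gaussianPDFReal_zero_one]
  have h := (((hasDerivAt_pow 2 x).div_const 2).fun_neg.exp).const_mul (√(2 * π))⁻¹
  exact h.congr_deriv (by push_cast; ring)

lemma tendsto_rpow_abs_mul_gaussianPDFReal_zero_one (s : ℝ) :
    Tendsto (fun x => |x| ^ s * φ x) (cocompact ℝ) (𝓝 0) := by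
  have h := (tendsto_rpow_abs_mul_exp_neg_mul_sq_cocompact one_half_pos s).const_mul (√(2 * π))⁻¹
  rw [mul_zero] at h
  refine h.congr fun x => ?_
  rw [gaussianPDFReal_zero_one]; ring_nf

noncomputable def gaussianTail (a : ℝ) : ℝ := ∫ x in Ioi a, φ x

lemma gaussianTail_eq_sub_intervalIntegral (t : ℝ) :
    gaussianTail t = gaussianTail 0 - ∫ x in (0 : ℝ)..t, φ x := by
  rw [gaussianTail, gaussianTail, ← intervalIntegral.integral_Ioi_sub_Ioi'
    (integrable_gaussianPDFReal 0 1).integrableOn (integrable_gaussianPDFReal 0 1).integrableOn]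
  ring

lemma hasDerivAt_gaussianTail (a : ℝ) : HasDerivAt gaussianTail (-φ a) a := by
  have hcont : Continuous φ := by
    rw [funext gaussianPDFReal_zero_one]; fun_prop
  have h := (intervalIntegral.integral_hasDerivAt_right (a := 0) (b := a)
    (integrable_gaussianPDFReal 0 1).intervalIntegrable
    hcont.stronglyMeasurable.stronglyMeasurableAtFilter hcont.continuousAt).const_sub
    (gaussianTail 0)
  rwa [← funext gaussianTail_eq_sub_intervalIntegral] at h

lemma tendsto_gaussianTail_atTop : Tendsto gaussianTail atTop (𝓝 0) := by
  have h := (intervalIntegral_tendsto_integral_Ioi 0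
    (integrable_gaussianPDFReal 0 1).integrableOn tendsto_id).const_sub (gaussianTail 0)
  rw [← gaussianTail, sub_self] at h
  exact h.congr fun t => (gaussianTail_eq_sub_intervalIntegral t).symm

lemma gaussianTail_zero : gaussianTail 0 = 1 / 2 := by
  have hint := (integrable_gaussianPDFReal 0 1).integrableOn (s := Iic 0)
  have hsymm : ∫ x in Iic 0, φ x = gaussianTail 0 := by
    rw [gaussianTail, ← neg_zero, ← integral_comp_neg_Ioi]
    simp [gaussianPDFReal]
  have htotal := intervalIntegral.integral_Iic_add_Ioi hint
    (integrable_gaussianPDFReal 0 1).integrableOn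
  rw [integral_gaussianPDFReal_eq_one 0 one_ne_zero, hsymm] at htotal
  rw [gaussianTail] at *
  linarith

noncomputable def gaussianSqExcess (a : ℝ) : ℝ := (1 + a ^ 2) * gaussianTail a - a * φ a

lemma integral_Ioi_sub_sq_mul_gaussianPDFReal (a : ℝ) :
    ∫ x in Ioi a, (x - a) ^ 2 * φ x = gaussianSqExcess a := by
  have hderiv (x : ℝ) : HasDerivAt (fun x => (2 * a - x) * φ x - (1 + a ^ 2) * gaussianTail x)
      ((x - a) ^ 2 * φ x) x :=
    (((hasDerivAt_id x).const_sub (2 * a)).mul (hasDerivAt_gaussianPDFReal_zero_one x)).sub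
      ((hasDerivAt_gaussianTail x).const_mul _) |>.congr_deriv (by simp only [id]; ring)
  have hlim : Tendsto (fun x => (2 * a - x) * φ x - (1 + a ^ 2) * gaussianTail x) atTop (𝓝 0) := by
    have hφ := (tendsto_rpow_abs_mul_gaussianPDFReal_zero_one 0).mono_left atTop_le_cocompact
    have hxφ := (tendsto_rpow_abs_mul_gaussianPDFReal_zero_one 1).mono_left atTop_le_cocompact
    have h := ((hφ.const_mul (2 * a)).sub hxφ).sub
      (tendsto_gaussianTail_atTop.const_mul (1 + a ^ 2))
    simp only [mul_zero, sub_zero] at h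
    refine h.congr' ?_
    filter_upwards [eventually_ge_atTop 0] with x hx
    rw [rpow_zero, rpow_one, abs_of_nonneg hx]
    ring
  rw [integral_Ioi_of_hasDerivAt_of_nonneg' (fun x _ => hderiv x)
    (fun x _ => mul_nonneg (sq_nonneg _) (gaussianPDFReal_nonneg 0 1 x)) hlim, gaussianSqExcess]
  ring

lemma setIntegral_Ici_sub_sq_stdGaussian (a : ℝ) :
    ∫ x in Ici a, (x - a) ^ 2 ∂stdGaussian = gaussianSqExcess a := by
  rw [_root_.stdGaussian, gaussianReal_of_var_ne_zero 0 one_ne_zero,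
    setIntegral_withDensity_eq_setIntegral_toReal_smul (measurable_gaussianPDF 0 1)
      (ae_of_all _ fun _ => gaussianPDF_lt_top) _ measurableSet_Ici,
    integral_Ici_eq_integral_Ioi, ← integral_Ioi_sub_sq_mul_gaussianPDFReal]
  simp only [toReal_gaussianPDF, smul_eq_mul, mul_comm]

lemma hasDerivAt_gaussianSqExcess (t : ℝ) :
    HasDerivAt gaussianSqExcess (2 * (t * gaussianTail t - φ t)) t :=
  ((((hasDerivAt_pow 2 t).const_add 1).mul (hasDerivAt_gaussianTail t)).sub
    ((hasDerivAt_id t).mul (hasDerivAt_gaussianPDFReal_zero_one t))).congr_deriv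
    (by simp only [id]; ring)

lemma hasDerivAt_mul_gaussianTail_sub (t : ℝ) :
    HasDerivAt (fun t => t * gaussianTail t - φ t) (gaussianTail t) t :=
  (((hasDerivAt_id t).mul (hasDerivAt_gaussianTail t)).sub
    (hasDerivAt_gaussianPDFReal_zero_one t)).congr_deriv (by simp only [id]; ring)

lemma two_mul_gaussianTail_add_le_one {t : ℝ} (ht : 0 ≤ t) :
    2 * gaussianTail t + 2 * t * φ t ≤ 1 := by
  have hderiv (u : ℝ) : HasDerivAt (fun u => 2 * gaussianTail u + 2 * u * φ u)
      (-2 * u ^ 2 * φ u) u :=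
    (((hasDerivAt_gaussianTail u).const_mul 2).add
      (((hasDerivAt_id u).const_mul 2).mul (hasDerivAt_gaussianPDFReal_zero_one u))).congr_deriv
      (by simp only [id]; ring)
  have hanti : AntitoneOn (fun u => 2 * gaussianTail u + 2 * u * φ u) (Ici 0) :=
    antitoneOn_of_deriv_nonpos (convex_Ici 0)
      (fun u _ => (hderiv u).continuousAt.continuousWithinAt)
      (fun u _ => (hderiv u).differentiableAt.differentiableWithinAt)
      (fun u _ => by
        rw [(hderiv u).deriv]
        have := gaussianPDFReal_nonneg 0 1 u
        nlinarith [sq_nonneg u])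
  have h0 := hanti self_mem_Ici (mem_Ici.2 ht) ht
  simp only [gaussianTail_zero, mul_zero, zero_mul, add_zero] at h0
  linarith

lemma concaveOn_div_self_of_hasDerivAt {f f' f'' : ℝ → ℝ}
    (hf : ∀ x, 0 < x → HasDerivAt f (f' x) x) (hf' : ∀ x, 0 < x → HasDerivAt f' (f'' x) x)
    (hnonpos : ∀ x, 0 < x → x ^ 2 * f'' x - 2 * x * f' x + 2 * f x ≤ 0) :
    ConcaveOn ℝ (Ioi 0) (fun x => f x / x) := by
  have hquot (x : ℝ) (hx : 0 < x) :
      HasDerivAt (fun x => f x / x) ((x * f' x - f x) / x ^ 2) x :=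
    ((hf x hx).div (hasDerivAt_id x) hx.ne').congr_deriv (by simp only [id]; ring)
  refine concaveOn_of_hasDerivWithinAt2_nonpos (convex_Ioi 0)
    (f' := fun x => (x * f' x - f x) / x ^ 2)
    (f'' := fun x => (x ^ 2 * f'' x - 2 * x * f' x + 2 * f x) / x ^ 3)
    (fun x hx => (hquot x hx).continuousAt.continuousWithinAt) ?_ ?_ ?_ <;>
    rw [interior_Ioi] <;> intro x (hx : 0 < x)
  · exact (hquot x hx).hasDerivWithinAt
  · have hnum : HasDerivAt (fun x => x * f' x - f x) (x * f'' x) x :=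
      (((hasDerivAt_id x).mul (hf' x hx)).sub (hf x hx)).congr_deriv (by simp only [id]; ring)
    refine (hnum.div (hasDerivAt_pow 2 x) (pow_ne_zero 2 hx.ne')).hasDerivWithinAt.congr_deriv ?_
    field_simp
    ring
  · exact div_nonpos_of_nonpos_of_nonneg (hnonpos x hx) (by positivity)

lemma concaveOn_gaussianSqExcess_sub_half_div {s : ℝ} (hs : 0 ≤ s) :
    ConcaveOn ℝ (Ioi 0) (fun x => (gaussianSqExcess (s * x) - 1 / 2) / x) := by
  have hscale (x : ℝ) : HasDerivAt (fun x => s * x) s x := by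
    simpa using (hasDerivAt_id x).const_mul s
  refine concaveOn_div_self_of_hasDerivAt
    (f' := fun x => s * (2 * (s * x * gaussianTail (s * x) - φ (s * x))))
    (f'' := fun x => 2 * s ^ 2 * gaussianTail (s * x))
    (fun x _ => (((hasDerivAt_gaussianSqExcess (s * x)).comp x (hscale x)).sub_const _).congr_deriv
      (by ring))
    (fun x _ => (((hasDerivAt_mul_gaussianTail_sub (s * x)).comp x (hscale x)).const_mul 2
      |>.const_mul s).congr_deriv (by ring))
    fun x hx => ?_
  have hK := two_mul_gaussianTail_add_le_one (mul_nonneg hs hx.le)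
  unfold gaussianSqExcess
  linear_combination hK

lemma strictConcaveOn_mul_sub_mul_sq (p : ℝ) {c : ℝ} (hc : 0 < c) :
    StrictConcaveOn ℝ univ (fun x => p * x - c * x ^ 2) := by
  refine ⟨convex_univ, fun x _ y _ hxy a b ha hb hab => ?_⟩
  obtain rfl : b = 1 - a := by linarith
  have hgap : 0 < c * (a * (1 - a) * (x - y) ^ 2) :=
    mul_pos hc (mul_pos (mul_pos ha hb) (sq_pos_of_ne_zero (sub_ne_zero.2 hxy)))
  simp only [smul_eq_mul]
  linear_combination hgap

theorem ConcaveOn.mul_comp_add_inv_smul {𝕜 E : Type*} [Field 𝕜] [LinearOrder 𝕜]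
    [IsStrictOrderedRing 𝕜] [AddCommGroup E] [Module 𝕜 E] {S : Set E} {g : E → 𝕜}
    (hg : ConcaveOn 𝕜 S g) {c d : E} (hcd : ∀ β : 𝕜, 0 < β → c + β⁻¹ • d ∈ S) :
    ConcaveOn 𝕜 (Ioi 0) (fun β => β * g (c + β⁻¹ • d)) := by
  refine ⟨convex_Ioi 0, fun β₁ (hβ₁ : 0 < β₁) β₂ (hβ₂ : 0 < β₂) a b ha hb hab => ?_⟩
  simp only [smul_eq_mul]
  set β := a * β₁ + b * β₂
  have hβ : 0 < β := by
    rcases ha.lt_or_eq with ha | rfl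
    · positivity
    · simp only [zero_add] at hab; simp [β, hab, hβ₂]
  have hw : a * β₁ / β + b * β₂ / β = 1 := by rw [← add_div, div_self hβ.ne']
  have hcomb : (a * β₁ / β) • (c + β₁⁻¹ • d) + (b * β₂ / β) • (c + β₂⁻¹ • d) =
      c + β⁻¹ • d := by
    match_scalars
    · simpa using hw
    · field_simp
      exact hab
  have hmid : (a * β₁ / β) • g (c + β₁⁻¹ • d) + (b * β₂ / β) • g (c + β₂⁻¹ • d) ≤
      g (c + β⁻¹ • d) :=
    hcomb ▸ hg.2 (hcd β₁ hβ₁) (hcd β₂ hβ₂) (by positivity) (by positivity) hw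
  rw [smul_eq_mul, smul_eq_mul] at hmid
  calc a * (β₁ * g (c + β₁⁻¹ • d)) + b * (β₂ * g (c + β₂⁻¹ • d))
      = β * (a * β₁ / β * g (c + β₁⁻¹ • d) + b * β₂ / β * g (c + β₂⁻¹ • d)) := by
        field_simp
    _ ≤ β * g (c + β⁻¹ • d) := by gcongr

theorem strict_concavity_of_D_general (δ ρ P lam τ : ℝ) (hlam : 0 ≤ lam) (hτ : 0 < τ) :
    StrictConcaveOn ℝ (Set.Ioi (0 : ℝ)) (fun β => Dfun δ ρ P lam β τ) := by
  have hY : ConcaveOn ℝ (Ioi 0) (fun β => β * ((gaussianSqExcess (√P * (τ⁻¹ + β⁻¹ • (2 * lam)))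
      - 1 / 2) / (τ⁻¹ + β⁻¹ • (2 * lam)))) :=
    (concaveOn_gaussianSqExcess_sub_half_div (sqrt_nonneg P)).mul_comp_add_inv_smul
      fun β hβ => show 0 < τ⁻¹ + β⁻¹ * (2 * lam) by positivity
  have hquad := (strictConcaveOn_mul_sub_mul_sq (τ * δ / 2 + ρ / (2 * τ)) (c := 1 / 4)
    (by norm_num)).subset (subset_univ _) (convex_Ioi 0)
  refine (hquad.add_concaveOn hY).congr fun β (hβ : 0 < β) => ?_
  have hα : τ⁻¹ + β⁻¹ • (2 * lam) = 1 / τ + 2 * lam / β := by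
    rw [smul_eq_mul]; ring
  simp only [Pi.add_apply, hα, Dfun, if_neg hβ.ne', Yfun, setIntegral_Ici_sub_sq_stdGaussian]
  ring

/-- for fixed `τ > 0` and parameters `δ, ρ, P > 0`, `λ ≥ 0`, the function
`β ↦ D(β,τ)` is strictly concave on `(0,∞)`. -/
theorem strict_concavity_of_D (δ ρ P lam τ : ℝ)
    (hδ : 0 < δ) (hρ : 0 < ρ) (hP : 0 < P) (hlam : 0 ≤ lam) (hτ : 0 < τ) :
    StrictConcaveOn ℝ (Set.Ioi (0 : ℝ)) (fun β => Dfun δ ρ P lam β τ) :=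
  strict_concavity_of_D_general δ ρ P lam τ hlam hτ
end

section
/- Assume either λ > 0, or λ = 0 and δ > 1, and let (β*, τ*) be the unique saddle point of max_{β ≥ 0} min_{τ > 0} D(β,τ); set α* = 1/τ* + 2λ/β*. Then the first-order optimality condition (τ*)²·δ − ρ = 2P·Pr[H ≥ √P·α*] + (1/(α*)²)·E[H²·1{−√P·α* ≤ H ≤ √P·α*}] holds, where H is a standard Gaussian N(0,1) random variable. -/
open MeasureTheory ProbabilityTheory Filter

/-!
At `β = 0` the value of `D` is `0`. Since the squared excess `E[(H - c)²; H ≥ c]` is nonnegative,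
`D(β, τ) ≥ (β/2)(τδ + ρ/τ - β/2 - 1/α)`, which is positive for `β = 2λτδ/(1 + λ)` if `λ > 0` and for
`β = ρ/τ` if `λ = 0` and `δ > 1`. Hence `β* > 0`, so `τ ↦ D(β*, τ)` is differentiable with a minimum
at `τ*`, and its derivative vanishes there. Through the Gaussian density,
`d/dc E[(H - c)²; H ≥ c] = -2 E[H - c; H ≥ c]`; together with `E[H²; |H| ≤ c] = 1 - 2 E[H²; H ≥ c]`
(symmetry of `H`), the vanishing derivative is the stated identity.
-/

open Set
open scoped NNReal

theorem hasDerivAt_setIntegral_Ici {g : ℝ → ℝ} (hg : Continuous g) (hint : Integrable g)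
    (c : ℝ) : HasDerivAt (fun b ↦ ∫ x in Ici b, g x) (-g c) c := by
  have htail (b : ℝ) : ∫ x in Ici b, g x = (∫ x in Ioi 0, g x) - ∫ x in (0)..b, g x := by
    rw [integral_Ici_eq_integral_Ioi, ← intervalIntegral.integral_interval_add_Ioi
      hint.integrableOn hint.integrableOn, intervalIntegral.integral_symm]
    ring
  simp_rw [htail]
  exact (intervalIntegral.integral_hasDerivAt_right (hg.intervalIntegrable _ _)
    hg.aestronglyMeasurable.stronglyMeasurableAtFilter hg.continuousAt).const_sub _

theorem HasDerivAt.div_inv_add_mul_comp {g : ℝ → ℝ} {g' a β u τ : ℝ} (hτ : τ ≠ 0)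
    (hα : 1 / τ + a ≠ 0) (hg : HasDerivAt g g' (u * (1 / τ + a))) :
    HasDerivAt (fun t ↦ β / (1 / t + a) * g (u * (1 / t + a)))
      (β / (τ * (1 / τ + a)) ^ 2 * (g (u * (1 / τ + a)) - u * (1 / τ + a) * g')) τ := by
  have hα' : HasDerivAt (fun t ↦ 1 / t + a) (-(1 / τ ^ 2)) τ := by
    simpa only [one_div] using (hasDerivAt_inv hτ).add_const a
  have hcomp : HasDerivAt (fun t ↦ g (u * (1 / t + a))) (g' * (u * -(1 / τ ^ 2))) τ :=
    hg.comp τ (hα'.const_mul u)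
  refine (((hasDerivAt_const τ β).div hα' hα).mul hcomp).congr_deriv ?_
  simp only [Pi.div_apply]
  field_simp
  ring

section GaussianReal

variable {μ : ℝ} {v : ℝ≥0}

theorem continuous_gaussianPDFReal : Continuous (gaussianPDFReal μ v) := by
  unfold gaussianPDFReal
  fun_prop

theorem setIntegral_gaussianReal_eq_setIntegral_smul (hv : v ≠ 0) (f : ℝ → ℝ) {s : Set ℝ}
    (hs : MeasurableSet s) :
    ∫ x in s, f x ∂gaussianReal μ v = ∫ x in s, gaussianPDFReal μ v x • f x := by
  rw [gaussianReal_of_var_ne_zero _ hv, setIntegral_withDensity_eq_setIntegral_toReal_smul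
    (measurable_gaussianPDF μ v) (ae_of_all _ fun _ ↦ gaussianPDF_lt_top) f hs]
  simp only [toReal_gaussianPDF]

theorem integrable_gaussianPDFReal_smul (hv : v ≠ 0) {f : ℝ → ℝ}
    (hf : Integrable f (gaussianReal μ v)) :
    Integrable (fun x ↦ gaussianPDFReal μ v x • f x) := by
  rw [gaussianReal_of_var_ne_zero _ hv, integrable_withDensity_iff_integrable_smul'
    (measurable_gaussianPDF μ v) (ae_of_all _ fun _ ↦ gaussianPDF_lt_top)] at hf
  simpa only [toReal_gaussianPDF] using hf

theorem hasDerivAt_setIntegral_Ici_gaussianReal (hv : v ≠ 0) {f : ℝ → ℝ} (hf : Continuous f)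
    (hint : Integrable f (gaussianReal μ v)) (c : ℝ) :
    HasDerivAt (fun b ↦ ∫ x in Ici b, f x ∂gaussianReal μ v)
      (-(gaussianPDFReal μ v c * f c)) c := by
  simp_rw [setIntegral_gaussianReal_eq_setIntegral_smul hv f measurableSet_Ici]
  exact hasDerivAt_setIntegral_Ici (continuous_gaussianPDFReal.mul hf)
    (integrable_gaussianPDFReal_smul hv hint) c

theorem integrable_pow_gaussianReal (k : ℕ) :
    Integrable (fun x ↦ x ^ k) (gaussianReal μ v) := by
  rcases eq_or_ne k 0 with rfl | hk
  · simp
  refine ((memLp_id_gaussianReal k).integrable_norm_pow hk).mono' (by fun_prop)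
    (ae_of_all _ fun x ↦ ?_)
  simp [norm_pow]

theorem integral_sq_gaussianReal_zero : ∫ x, x ^ 2 ∂gaussianReal 0 v = v := by
  simpa [integral_id_gaussianReal] using
    (variance_eq_integral (μ := gaussianReal 0 v) measurable_id.aemeasurable).symm.trans
      variance_id_gaussianReal

theorem setIntegral_Iic_neg_gaussianReal_zero (f : ℝ → ℝ) (c : ℝ) :
    ∫ x in Iic (-c), f x ∂gaussianReal 0 v = ∫ x in Ici c, f (-x) ∂gaussianReal 0 v := by
  have hneg : MeasurableEmbedding fun x : ℝ ↦ -x := (Homeomorph.neg ℝ).measurableEmbedding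
  conv_lhs => rw [← neg_zero, ← gaussianReal_map_neg, hneg.setIntegral_map]
  simp

theorem setIntegral_Icc_sq_gaussianReal_zero (hv : v ≠ 0) {c : ℝ} (hc : 0 ≤ c) :
    ∫ x in Icc (-c) c, x ^ 2 ∂gaussianReal 0 v =
      v - 2 * ∫ x in Ici c, x ^ 2 ∂gaussianReal 0 v := by
  have := nullSingletonClass_gaussianReal (μ := 0) hv
  have hint := integrable_pow_gaussianReal (μ := 0) (v := v) 2
  have hleft := setIntegral_Iic_neg_gaussianReal_zero (v := v) (fun x ↦ x ^ 2) c
  have hsplit := intervalIntegral.integral_Iic_add_Ioi (b := -c)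
    hint.integrableOn hint.integrableOn
  have hright := intervalIntegral.integral_interval_add_Ioi (a := -c) (b := c)
    hint.integrableOn hint.integrableOn
  rw [intervalIntegral.integral_of_le (by linarith), ← integral_Icc_eq_integral_Ioc] at hright
  rw [integral_Ici_eq_integral_Ioi] at hleft ⊢
  simp only [even_two, Even.neg_pow] at hleft
  rw [integral_sq_gaussianReal_zero] at hsplit
  linarith

end GaussianReal

noncomputable def tailMoment (k : ℕ) (c : ℝ) : ℝ := ∫ x in Ici c, x ^ k ∂stdGaussian

noncomputable def sqExcess (c : ℝ) : ℝ := ∫ x in Ici c, (x - c) ^ 2 ∂stdGaussian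

theorem hasDerivAt_tailMoment (k : ℕ) (c : ℝ) :
    HasDerivAt (tailMoment k) (-(gaussianPDFReal 0 1 c * c ^ k)) c :=
  hasDerivAt_setIntegral_Ici_gaussianReal one_ne_zero (continuous_pow k)
    (integrable_pow_gaussianReal k) c

theorem tailMoment_zero (c : ℝ) : tailMoment 0 c = (stdGaussian (Ici c)).toReal := by
  simp [tailMoment, measureReal_def]

theorem sqExcess_eq (c : ℝ) :
    sqExcess c = tailMoment 2 c - 2 * c * tailMoment 1 c + c ^ 2 * tailMoment 0 c := by
  have hint (k : ℕ) : Integrable (fun x ↦ x ^ k) (stdGaussian.restrict (Ici c)) :=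
    (integrable_pow_gaussianReal k).integrableOn
  simp only [sqExcess, tailMoment]
  rw [← integral_const_mul, ← integral_const_mul, ← integral_sub (hint 2) ((hint 1).const_mul _),
    ← integral_add (f := fun x ↦ x ^ 2 - 2 * c * x ^ 1) ((hint 2).sub ((hint 1).const_mul _))
      ((hint 0).const_mul _)]
  exact setIntegral_congr_fun measurableSet_Ici fun x _ ↦ by ring

theorem hasDerivAt_sqExcess (c : ℝ) :
    HasDerivAt sqExcess (2 * (c * tailMoment 0 c - tailMoment 1 c)) c := by
  have h : HasDerivAt (fun x ↦ tailMoment 2 x - 2 * x * tailMoment 1 x + x ^ 2 * tailMoment 0 x)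
      _ c :=
    ((hasDerivAt_tailMoment 2 c).sub
      (((hasDerivAt_id' c).const_mul 2).mul (hasDerivAt_tailMoment 1 c))).add
      ((hasDerivAt_pow 2 c).mul (hasDerivAt_tailMoment 0 c))
  rw [show sqExcess = _ from funext sqExcess_eq]
  exact h.congr_deriv (by push_cast; ring)

theorem setIntegral_Icc_sq_stdGaussian {c : ℝ} (hc : 0 ≤ c) :
    ∫ x in Icc (-c) c, x ^ 2 ∂stdGaussian = 1 - 2 * tailMoment 2 c := by
  have h := setIntegral_Icc_sq_gaussianReal_zero (v := 1) one_ne_zero hc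
  rwa [NNReal.coe_one] at h

theorem Dfun_of_ne_zero (δ ρ P lam : ℝ) {β : ℝ} (hβ : β ≠ 0) :
    (fun τ ↦ Dfun δ ρ P lam β τ) = fun τ ↦ τ * β * δ / 2 + ρ * β / (2 * τ) - β ^ 2 / 4 +
      β / (1 / τ + 2 * lam / β) * (sqExcess (√P * (1 / τ + 2 * lam / β)) - 1 / 2) := by
  ext τ
  rw [Dfun, if_neg hβ, Yfun, sqExcess]

theorem Dfun_pos {δ ρ P lam β τ : ℝ} (hβ : 0 < β) (hτ : 0 < τ) (hlam : 0 ≤ lam)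
    (h : 1 / (1 / τ + 2 * lam / β) + β / 2 < τ * δ + ρ / τ) : 0 < Dfun δ ρ P lam β τ := by
  have hα : 0 < 1 / τ + 2 * lam / β := by positivity
  have hW : 0 ≤ sqExcess (√P * (1 / τ + 2 * lam / β)) :=
    setIntegral_nonneg measurableSet_Ici fun x _ ↦ sq_nonneg _
  rw [congrFun (Dfun_of_ne_zero δ ρ P lam hβ.ne') τ]
  generalize 1 / τ + 2 * lam / β = α at *
  generalize sqExcess (√P * α) = W at *
  have hgap : 0 < β / 2 * (τ * δ + ρ / τ - β / 2 - 1 / α) :=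
    mul_pos (by positivity) (by linarith)
  have hsplit : τ * β * δ / 2 + ρ * β / (2 * τ) - β ^ 2 / 4 + β / α * (W - 1 / 2) =
      β / 2 * (τ * δ + ρ / τ - β / 2 - 1 / α) + β / α * W := by
    ring
  rw [hsplit]
  positivity

theorem exists_pos_Dfun {δ ρ P lam τ : ℝ} (hδ : 0 < δ) (hρ : 0 < ρ) (hlam : 0 ≤ lam)
    (hcase : 0 < lam ∨ (lam = 0 ∧ 1 < δ)) (hτ : 0 < τ) :
    ∃ β > 0, 0 < Dfun δ ρ P lam β τ := by
  rcases hcase with hl | ⟨rfl, hδ1⟩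
  · set β := 2 * lam * τ * δ / (1 + lam)
    have hβ : 0 < β := by positivity
    refine ⟨β, hβ, Dfun_pos hβ hτ hlam ?_⟩
    have hinv : 1 / (1 / τ + 2 * lam / β) ≤ β / (2 * lam) := by
      simpa using one_div_le_one_div_of_le (a := 2 * lam / β) (by positivity)
        (le_add_of_nonneg_left (by positivity : (0 : ℝ) ≤ 1 / τ))
    have hβ_eq : β / (2 * lam) + β / 2 = τ * δ := by
      simp only [β]
      field_simp
    have : 0 < ρ / τ := by positivity
    linarith
  · refine ⟨ρ / τ, by positivity, Dfun_pos (by positivity) hτ le_rfl ?_⟩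
    have hρτ : 0 < ρ / τ := by positivity
    have : τ < τ * δ := by nlinarith
    simp only [mul_zero, zero_div, add_zero, one_div_one_div]
    linarith

theorem IsSaddle.fst_pos {δ ρ P lam βs τs : ℝ} (hsad : IsSaddle δ ρ P lam βs τs)
    (hδ : 0 < δ) (hρ : 0 < ρ) (hlam : 0 ≤ lam) (hcase : 0 < lam ∨ (lam = 0 ∧ 1 < δ)) :
    0 < βs := by
  obtain ⟨hβs, hτs, hmax, -⟩ := hsad
  refine hβs.lt_of_ne' fun hβs_zero ↦ ?_
  obtain ⟨β, hβ, hDβ⟩ := exists_pos_Dfun (P := P) hδ hρ hlam hcase hτs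
  have hD0 : Dfun δ ρ P lam βs τs = 0 := if_pos hβs_zero
  linarith [hmax β hβ.le]

theorem hasDerivAt_Dfun_snd (δ ρ P lam : ℝ) {β τ α c : ℝ} (hβ : β ≠ 0) (hτ : τ ≠ 0)
    (hα₀ : α ≠ 0) (hα : 1 / τ + 2 * lam / β = α) (hc : √P * α = c) :
    HasDerivAt (fun t ↦ Dfun δ ρ P lam β t) (β * δ / 2 - ρ * β / (2 * τ ^ 2) +
      β / (τ * α) ^ 2 * (sqExcess c - 1 / 2 - c * (2 * (c * tailMoment 0 c - tailMoment 1 c))))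
      τ := by
  subst hα hc
  rw [Dfun_of_ne_zero δ ρ P lam hβ]
  have hlin : HasDerivAt (fun t ↦ t * β * δ / 2) (β * δ / 2) τ := by
    simpa only [mul_assoc, one_mul] using ((hasDerivAt_id' τ).mul_const (β * δ)).div_const 2
  have hrecip : HasDerivAt (fun t ↦ ρ * β / (2 * t)) (-(ρ * β / (2 * τ ^ 2))) τ := by
    refine ((hasDerivAt_const τ (ρ * β)).fun_div ((hasDerivAt_id' τ).const_mul 2)
      (by positivity)).congr_deriv ?_
    field_simp
    ring
  exact ((hlin.add hrecip).sub_const _).add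
    (((hasDerivAt_sqExcess _).sub_const (1 / 2)).div_inv_add_mul_comp hτ hα₀)

/-- first-order optimality condition satisfied by the saddle point:
`(τ*)²δ − ρ = 2P·Pr[H ≥ √P·α*] + (1/(α*)²)·E[H²·1{−√P·α* ≤ H ≤ √P·α*}]`
where `α* = 1/τ* + 2λ/β*`. -/
theorem saddle_point_first_order_condition (δ ρ P lam : ℝ)
    (hδ : 0 < δ) (hρ : 0 < ρ) (hP : 0 < P) (hlam : 0 ≤ lam)
    (hcase : 0 < lam ∨ (lam = 0 ∧ 1 < δ))
    (βs τs : ℝ) (hsad : IsSaddle δ ρ P lam βs τs) :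
    τs ^ 2 * δ - ρ =
      2 * P * (stdGaussian (Set.Ici (Real.sqrt P * (1 / τs + 2 * lam / βs)))).toReal
      + (1 / (1 / τs + 2 * lam / βs) ^ 2) *
        ∫ h in Set.Icc (-(Real.sqrt P * (1 / τs + 2 * lam / βs)))
            (Real.sqrt P * (1 / τs + 2 * lam / βs)), h ^ 2 ∂stdGaussian := by
  have hβ : 0 < βs := hsad.fst_pos hδ hρ hlam hcase
  obtain ⟨-, hτ, -, hmin⟩ := hsad
  obtain ⟨α, hα_def⟩ : ∃ α, 1 / τs + 2 * lam / βs = α := ⟨_, rfl⟩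
  have hα : 0 < α := hα_def ▸ by positivity
  have hlocal : IsLocalMin (fun τ ↦ Dfun δ ρ P lam βs τ) τs :=
    IsMinOn.isLocalMin (fun τ hτ' ↦ hmin τ hτ') (Ioi_mem_nhds hτ)
  have hcrit := hlocal.hasDerivAt_eq_zero
    (hasDerivAt_Dfun_snd δ ρ P lam hβ.ne' hτ.ne' hα.ne' hα_def rfl)
  rw [hα_def, ← tailMoment_zero, setIntegral_Icc_sq_stdGaussian (by positivity)]
  rw [sqExcess_eq] at hcrit
  field_simp at hcrit ⊢
  rw [mul_zero, mul_eq_zero, or_iff_right hβ.ne'] at hcrit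
  linear_combination hcrit + 2 * α ^ 2 * tailMoment 0 (α * √P) * Real.sq_sqrt hP.le
end

section
/- Assume λ = 0 and δ > 1, and let (β*, τ*) be the unique saddle point of max_{β ≥ 0} min_{τ > 0} D(β,τ). Then τ* is the unique τ > 0 solving the equation τ²·δ − ρ = 2P·Pr[H ≥ √P/τ] + τ²·E[H²·1{−√P/τ ≤ H ≤ √P/τ}]; moreover β* = max(0, τ*·δ + ρ/τ* + 2·Ỹ(τ*)), where Ỹ(τ) := τ·(E[(H − √P/τ)²·1{H ≥ √P/τ}] − 1/2), and the optimal value of the max–min problem equals (max(0, τ*·δ/2 + ρ/(2τ*) + Ỹ(τ*)))². -/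
open MeasureTheory ProbabilityTheory Filter

noncomputable section

/-- `Ỹ(τ) = τ·(E[(H − √P/τ)²·1{H ≥ √P/τ}] − 1/2)`. -/
def Ytilde (P τ : ℝ) : ℝ :=
  τ * ((∫ h in Set.Ici (Real.sqrt P / τ), (h - Real.sqrt P / τ) ^ 2 ∂stdGaussian) - 1 / 2)

/-!
With `λ = 0` the objective factors as `D(β, τ) = β g(τ) - β² / 4`, where
`g(τ) = τδ/2 + ρ/(2τ) + Ỹ(τ)`. Since `Ỹ(τ) ≥ -τ/2` and `δ > 1`, `g > 0`; hence the maximisation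
in `β` forces `β* = 2 g(τ*)`, and the minimisation in `τ` makes `τ*` a minimiser of `g` on `(0, ∞)`.

In terms of the standard normal density `φ` and tail `Q`, `Ỹ(τ) = τ (F(√P/τ) - 1/2)` with
`F(a) = E[(H - a)² 1{H ≥ a}] = (1 + a²) Q(a) - a φ(a)`, so
`g'(τ) = (δ - 1)/2 - ρ/(2τ²) + G(√P/τ)` with `G(a) = F(a) - a F'(a) = (1 - a²) Q(a) + a φ(a)`.
As `G'(a) = -2a Q(a) ≤ 0` for `a ≥ 0`, `g'` is strictly increasing, so `τ*` is its unique zero.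
Multiplied by `2τ²`, the equation `g'(τ) = 0` is the fixed-point equation, because
`E[H² 1{|H| ≤ a}] = 1 - 2 (a φ(a) + Q(a))`.
-/

open Set Real

lemma HasDerivAt.mul_comp_const_div {f : ℝ → ℝ} {f' s τ : ℝ} (hf : HasDerivAt f f' (s / τ))
    (hτ : τ ≠ 0) : HasDerivAt (fun t => t * f (s / t)) (f (s / τ) - s / τ * f') τ := by
  have hinner : HasDerivAt (fun t => s / t) (-(s / τ ^ 2)) τ := by
    simpa [div_eq_mul_inv] using (hasDerivAt_inv hτ).const_mul s
  refine ((hasDerivAt_id τ).mul (hf.comp τ hinner)).congr_deriv ?_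
  simp only [id, Function.comp_apply]
  generalize f (s / τ) = c
  field_simp
  ring

lemma eq_two_mul_of_forall_mul_sub_sq_le {b c : ℝ} (hc : 0 ≤ c)
    (h : ∀ β, 0 ≤ β → β * c - β ^ 2 / 4 ≤ b * c - b ^ 2 / 4) : b = 2 * c := by
  have hsq : (b - 2 * c) ^ 2 = 0 := le_antisymm (by nlinarith [h (2 * c) (by positivity)]) (sq_nonneg _)
  linarith [pow_eq_zero_iff two_ne_zero |>.mp hsq]

lemma integral_eq_two_mul_setIntegral_Ioi_add_setIntegral_Icc {f : ℝ → ℝ} (hf : Integrable f)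
    (heven : ∀ x, f (-x) = f x) {a : ℝ} (ha : 0 ≤ a) :
    ∫ x, f x = 2 * (∫ x in Ioi a, f x) + ∫ x in Icc (-a) a, f x := by
  have hsplit : (∫ x in Iic a, f x) + ∫ x in Ioi a, f x = ∫ x, f x := by
    rw [← compl_Iic, integral_add_compl measurableSet_Iic hf]
  have hleft : (∫ x in Iio (-a), f x) + ∫ x in Icc (-a) a, f x = ∫ x in Iic a, f x := by
    rw [← Iio_union_Icc_eq_Iic (by linarith : -a ≤ a), setIntegral_union
      ((Iio_disjoint_Ici le_rfl).mono_right Icc_subset_Ici_self) measurableSet_Icc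
      hf.integrableOn hf.integrableOn]
  have hmirror : ∫ x in Iio (-a), f x = ∫ x in Ioi a, f x := by
    rw [setIntegral_congr_set Iio_ae_eq_Iic, ← integral_comp_neg_Ioi]
    simp only [heven]
  linarith

lemma integral_eq_two_mul_setIntegral_Ioi_zero {f : ℝ → ℝ} (hf : Integrable f)
    (heven : ∀ x, f (-x) = f x) : ∫ x, f x = 2 * ∫ x in Ioi 0, f x := by
  simpa using integral_eq_two_mul_setIntegral_Ioi_add_setIntegral_Icc hf heven le_rfl

section StdNormal

def stdNormalPDF (x : ℝ) : ℝ := (√(2 * π))⁻¹ * exp (-x ^ 2 / 2)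

local notation "φ" => stdNormalPDF

lemma gaussianPDFReal_zero_one_s3 : gaussianPDFReal 0 1 = φ := by
  ext x; simp [gaussianPDFReal, stdNormalPDF]

lemma stdNormalPDF_pos (x : ℝ) : 0 < φ x := by
  unfold stdNormalPDF; positivity

lemma stdNormalPDF_neg (x : ℝ) : φ (-x) = φ x := by
  simp [stdNormalPDF]

lemma continuous_stdNormalPDF : Continuous φ := by
  unfold stdNormalPDF; fun_prop

lemma hasDerivAt_stdNormalPDF (x : ℝ) : HasDerivAt φ (-(x * φ x)) x := by
  have h : HasDerivAt (fun x : ℝ => -x ^ 2 / 2) (-x) x :=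
    ((hasDerivAt_pow 2 x).neg.div_const 2).congr_deriv (by ring)
  exact ((h.exp).const_mul (√(2 * π))⁻¹).congr_deriv (by rw [stdNormalPDF]; ring)

lemma integrable_pow_mul_stdNormalPDF (n : ℕ) : Integrable fun x => x ^ n * φ x := by
  have := (integrable_rpow_mul_exp_neg_mul_sq (by norm_num : (0 : ℝ) < 1 / 2)
    (s := n) (by linarith [n.cast_nonneg (α := ℝ)])).const_mul (√(2 * π))⁻¹
  convert this using 2 with x
  rw [rpow_natCast, stdNormalPDF]; ring_nf

lemma integrable_stdNormalPDF : Integrable φ := by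
  simpa using integrable_pow_mul_stdNormalPDF 0

lemma integrable_mul_stdNormalPDF : Integrable fun x => x * φ x := by
  simpa using integrable_pow_mul_stdNormalPDF 1

lemma integral_stdNormalPDF : ∫ x, φ x = 1 := by
  rw [← gaussianPDFReal_zero_one_s3]; exact integral_gaussianPDFReal_eq_one 0 one_ne_zero

lemma setIntegral_stdGaussian (f : ℝ → ℝ) {s : Set ℝ} (hs : MeasurableSet s) :
    ∫ x in s, f x ∂stdGaussian = ∫ x in s, f x * φ x := by
  have hpdf : gaussianPDF 0 1 = fun x => ((φ x).toNNReal : ENNReal) := by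
    ext x; rw [gaussianPDF, gaussianPDFReal_zero_one_s3]; rfl
  rw [_root_.stdGaussian, gaussianReal_of_var_ne_zero _ one_ne_zero, hpdf,
    setIntegral_withDensity_eq_setIntegral_smul continuous_stdNormalPDF.measurable.real_toNNReal f hs]
  congr 1; ext x
  rw [NNReal.smul_def, smul_eq_mul, coe_toNNReal _ (stdNormalPDF_pos x).le, mul_comm]

lemma tendsto_stdNormalPDF_atTop : Tendsto φ atTop (nhds 0) :=
  tendsto_zero_of_hasDerivAt_of_integrableOn_Ioi (a := 0) (fun x _ => hasDerivAt_stdNormalPDF x)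
    integrable_mul_stdNormalPDF.neg.integrableOn
    integrable_stdNormalPDF.integrableOn

lemma hasDerivAt_mul_stdNormalPDF (x : ℝ) :
    HasDerivAt (fun x => x * φ x) (φ x - x ^ 2 * φ x) x :=
  ((hasDerivAt_id x).mul (hasDerivAt_stdNormalPDF x)).congr_deriv (by simp only [id]; ring)

lemma tendsto_mul_stdNormalPDF_atTop : Tendsto (fun x => x * φ x) atTop (nhds 0) :=
  tendsto_zero_of_hasDerivAt_of_integrableOn_Ioi (a := 0)
    (fun x _ => hasDerivAt_mul_stdNormalPDF x)
    (integrable_stdNormalPDF.sub (integrable_pow_mul_stdNormalPDF 2)).integrableOn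
    integrable_mul_stdNormalPDF.integrableOn

def stdNormalTail (a : ℝ) : ℝ := ∫ x in Ioi a, φ x

local notation "Q" => stdNormalTail

lemma stdNormalTail_nonneg (a : ℝ) : 0 ≤ Q a :=
  setIntegral_nonneg measurableSet_Ioi fun x _ => (stdNormalPDF_pos x).le

lemma stdGaussian_Ici_toReal (a : ℝ) : (stdGaussian (Ici a)).toReal = Q a := by
  rw [_root_.stdGaussian, gaussianReal_apply_eq_integral _ one_ne_zero, gaussianPDFReal_zero_one_s3,
    ENNReal.toReal_ofReal (setIntegral_nonneg measurableSet_Ici fun x _ => (stdNormalPDF_pos x).le),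
    stdNormalTail, setIntegral_congr_set Ioi_ae_eq_Ici]

lemma hasDerivAt_stdNormalTail (a : ℝ) : HasDerivAt Q (-φ a) a := by
  have hQ : Q = fun b => Q 0 - ∫ x in (0 : ℝ)..b, φ x := by
    ext b
    rw [eq_sub_iff_add_eq, add_comm, stdNormalTail, stdNormalTail,
      intervalIntegral.integral_interval_add_Ioi integrable_stdNormalPDF.integrableOn
        integrable_stdNormalPDF.integrableOn]
  rw [hQ]
  exact (intervalIntegral.integral_hasDerivAt_right integrable_stdNormalPDF.intervalIntegrable
    (continuous_stdNormalPDF.stronglyMeasurableAtFilter _ _)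
    continuous_stdNormalPDF.continuousAt).const_sub _

lemma setIntegral_Ioi_mul_stdNormalPDF (a : ℝ) : ∫ x in Ioi a, x * φ x = φ a := by
  rw [integral_Ioi_of_hasDerivAt_of_tendsto' (f := fun x => -φ x)
    (fun x _ => (hasDerivAt_stdNormalPDF x).neg.congr_deriv (neg_neg _))
    integrable_mul_stdNormalPDF.integrableOn tendsto_stdNormalPDF_atTop.neg]
  ring

lemma setIntegral_Ioi_sq_mul_stdNormalPDF (a : ℝ) :
    ∫ x in Ioi a, x ^ 2 * φ x = a * φ a + Q a := by
  have hparts := integral_Ioi_of_hasDerivAt_of_tendsto' (a := a) (f := fun x => -(x * φ x))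
    (f' := fun x => x ^ 2 * φ x - φ x)
    (fun x _ => (hasDerivAt_mul_stdNormalPDF x).neg.congr_deriv (by ring))
    ((integrable_pow_mul_stdNormalPDF 2).sub integrable_stdNormalPDF).integrableOn
    (by simpa using tendsto_mul_stdNormalPDF_atTop.neg)
  rw [integral_sub (integrable_pow_mul_stdNormalPDF 2).integrableOn
    integrable_stdNormalPDF.integrableOn] at hparts
  rw [stdNormalTail]
  linarith

lemma stdNormalTail_zero : Q 0 = 1 / 2 := by
  have h := integral_eq_two_mul_setIntegral_Ioi_zero integrable_stdNormalPDF stdNormalPDF_neg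
  rw [integral_stdNormalPDF] at h
  rw [stdNormalTail]; linarith

lemma setIntegral_Icc_sq_mul_stdNormalPDF {a : ℝ} (ha : 0 ≤ a) :
    ∫ x in Icc (-a) a, x ^ 2 * φ x = 1 - 2 * (a * φ a + Q a) := by
  have heven (x : ℝ) : (-x) ^ 2 * φ (-x) = x ^ 2 * φ x := by rw [neg_sq, stdNormalPDF_neg]
  have htotal := integral_eq_two_mul_setIntegral_Ioi_zero (integrable_pow_mul_stdNormalPDF 2) heven
  have hsplit := integral_eq_two_mul_setIntegral_Ioi_add_setIntegral_Icc
    (integrable_pow_mul_stdNormalPDF 2) heven ha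
  rw [setIntegral_Ioi_sq_mul_stdNormalPDF, stdNormalTail_zero] at htotal
  rw [setIntegral_Ioi_sq_mul_stdNormalPDF] at hsplit
  linarith

def tailSqMoment (a : ℝ) : ℝ := ∫ h in Ici a, (h - a) ^ 2 ∂stdGaussian

lemma tailSqMoment_nonneg (a : ℝ) : 0 ≤ tailSqMoment a :=
  setIntegral_nonneg measurableSet_Ici fun _ _ => sq_nonneg _

lemma tailSqMoment_eq (a : ℝ) : tailSqMoment a = (1 + a ^ 2) * Q a - a * φ a := by
  have hexpand : (fun x => (x - a) ^ 2 * φ x)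
      = fun x => x ^ 2 * φ x - 2 * a * (x * φ x) + a ^ 2 * φ x := by
    ext x; ring
  have hsq := (integrable_pow_mul_stdNormalPDF 2).integrableOn (s := Ioi a)
  have hlin := (integrable_mul_stdNormalPDF.const_mul (2 * a)).integrableOn (s := Ioi a)
  have hconst := (integrable_stdNormalPDF.const_mul (a ^ 2)).integrableOn (s := Ioi a)
  have hdiff : IntegrableOn (fun x => x ^ 2 * φ x - 2 * a * (x * φ x)) (Ioi a) := hsq.sub hlin
  rw [tailSqMoment, setIntegral_stdGaussian _ measurableSet_Ici,
    ← setIntegral_congr_set Ioi_ae_eq_Ici, hexpand, integral_add hdiff hconst,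
    integral_sub hsq hlin, integral_const_mul, integral_const_mul,
    setIntegral_Ioi_mul_stdNormalPDF, setIntegral_Ioi_sq_mul_stdNormalPDF, stdNormalTail]
  ring

lemma hasDerivAt_tailSqMoment (a : ℝ) :
    HasDerivAt tailSqMoment (2 * (a * Q a - φ a)) a := by
  have hsq : HasDerivAt (fun a : ℝ => 1 + a ^ 2) (2 * a) a := by
    simpa using (hasDerivAt_pow 2 a).const_add 1
  rw [show tailSqMoment = fun a => (1 + a ^ 2) * Q a - a * φ a from funext tailSqMoment_eq]
  exact ((hsq.mul (hasDerivAt_stdNormalTail a)).sub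
    ((hasDerivAt_id a).mul (hasDerivAt_stdNormalPDF a))).congr_deriv (by simp only [id]; ring)

def tailSqExcess (a : ℝ) : ℝ := (1 - a ^ 2) * Q a + a * φ a

lemma hasDerivAt_tailSqExcess (a : ℝ) : HasDerivAt tailSqExcess (-(2 * a * Q a)) a := by
  have hsq : HasDerivAt (fun a : ℝ => 1 - a ^ 2) (-(2 * a)) a := by
    simpa using (hasDerivAt_pow 2 a).const_sub 1
  exact ((hsq.mul (hasDerivAt_stdNormalTail a)).add
    ((hasDerivAt_id a).mul (hasDerivAt_stdNormalPDF a))).congr_deriv (by simp only [id]; ring)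

lemma antitoneOn_tailSqExcess : AntitoneOn tailSqExcess (Ici 0) :=
  antitoneOn_of_hasDerivWithinAt_nonpos (convex_Ici 0)
    (fun a _ => (hasDerivAt_tailSqExcess a).continuousAt.continuousWithinAt)
    (fun a _ => (hasDerivAt_tailSqExcess a).hasDerivWithinAt)
    (fun a ha => by
      rw [interior_Ici] at ha
      have := mul_nonneg (mul_nonneg zero_le_two (le_of_lt ha)) (stdNormalTail_nonneg a)
      linarith)

end StdNormal

def saddleCoeff (δ ρ P τ : ℝ) : ℝ := τ * δ / 2 + ρ / (2 * τ) + Ytilde P τ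

def saddleCoeffDeriv (δ ρ P τ : ℝ) : ℝ := (δ - 1) / 2 - ρ / (2 * τ ^ 2) + tailSqExcess (√P / τ)

section Saddle

variable {δ ρ P : ℝ}

lemma Ytilde_eq_tailSqMoment (τ : ℝ) : Ytilde P τ = τ * (tailSqMoment (√P / τ) - 1 / 2) := rfl

lemma Dfun_lam_zero (β τ : ℝ) : Dfun δ ρ P 0 β τ = β * saddleCoeff δ ρ P τ - β ^ 2 / 4 := by
  rcases eq_or_ne β 0 with rfl | hβ
  · simp [Dfun]
  · simp only [Dfun, Yfun, saddleCoeff, Ytilde, if_neg hβ, mul_zero, zero_div, add_zero,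
      div_div_eq_mul_div, div_one, mul_one_div]
    ring

lemma saddleCoeff_pos (hδ : 1 < δ) (hρ : 0 ≤ ρ) {τ : ℝ} (hτ : 0 < τ) :
    0 < saddleCoeff δ ρ P τ := by
  have hY := mul_nonneg hτ.le (tailSqMoment_nonneg (√P / τ))
  have hδτ : τ * 1 < τ * δ := mul_lt_mul_of_pos_left hδ hτ
  have hρτ : 0 ≤ ρ / (2 * τ) := by positivity
  rw [saddleCoeff, Ytilde_eq_tailSqMoment]
  linarith

lemma hasDerivAt_saddleCoeff {τ : ℝ} (hτ : τ ≠ 0) :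
    HasDerivAt (saddleCoeff δ ρ P) (saddleCoeffDeriv δ ρ P τ) τ := by
  have hform : saddleCoeff δ ρ P
      = fun t => t * ((δ - 1) / 2) + ρ / 2 * t⁻¹ + t * tailSqMoment (√P / t) := by
    ext t; rw [saddleCoeff, Ytilde_eq_tailSqMoment]; ring
  rw [hform]
  refine ((((hasDerivAt_id τ).mul_const _).add ((hasDerivAt_inv hτ).const_mul _)).add
    ((hasDerivAt_tailSqMoment _).mul_comp_const_div hτ)).congr_deriv ?_
  rw [saddleCoeffDeriv, tailSqExcess, tailSqMoment_eq]
  generalize √P / τ = a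
  field_simp
  ring

lemma strictMonoOn_saddleCoeffDeriv (hρ : 0 < ρ) :
    StrictMonoOn (saddleCoeffDeriv δ ρ P) (Ioi 0) := by
  intro τ₁ hτ₁ τ₂ hτ₂ hlt
  have hexcess : tailSqExcess (√P / τ₁) ≤ tailSqExcess (√P / τ₂) :=
    antitoneOn_tailSqExcess (div_nonneg (sqrt_nonneg P) hτ₂.out.le)
      (div_nonneg (sqrt_nonneg P) hτ₁.out.le) (div_le_div_of_nonneg_left (sqrt_nonneg P) hτ₁ hlt.le)
  have hρ' : ρ / (2 * τ₂ ^ 2) < ρ / (2 * τ₁ ^ 2) := by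
    have := hτ₁.out
    gcongr
  rw [saddleCoeffDeriv, saddleCoeffDeriv]; linarith

lemma fixedPoint_iff_saddleCoeffDeriv_eq_zero (hP : 0 ≤ P) {τ : ℝ} (hτ : 0 < τ) :
    τ ^ 2 * δ - ρ = 2 * P * (stdGaussian (Ici (√P / τ))).toReal
        + τ ^ 2 * ∫ h in Icc (-(√P / τ)) (√P / τ), h ^ 2 ∂stdGaussian
      ↔ saddleCoeffDeriv δ ρ P τ = 0 := by
  have ha : 0 ≤ √P / τ := div_nonneg (sqrt_nonneg P) hτ.le
  rw [stdGaussian_Ici_toReal, setIntegral_stdGaussian _ measurableSet_Icc,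
    setIntegral_Icc_sq_mul_stdNormalPDF ha, ← sub_eq_zero]
  have hP_eq : P = (√P / τ) ^ 2 * τ ^ 2 := by
    rw [div_pow, sq_sqrt hP]; field_simp
  have hkey : τ ^ 2 * δ - ρ - (2 * P * stdNormalTail (√P / τ)
      + τ ^ 2 * (1 - 2 * (√P / τ * stdNormalPDF (√P / τ) + stdNormalTail (√P / τ))))
      = 2 * τ ^ 2 * saddleCoeffDeriv δ ρ P τ := by
    rw [saddleCoeffDeriv, tailSqExcess]
    generalize √P / τ = a at hP_eq
    subst hP_eq
    field_simp
    ring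
  rw [hkey, mul_eq_zero, or_iff_right (by positivity)]

end Saddle

/-- for `λ = 0` and `δ > 1`, `τ*` is the unique positive solution of the fixed
point equation, `β* = max(0, τ*δ + ρ/τ* + 2Ỹ(τ*))`, and the optimal value equals
`(max(0, τ*δ/2 + ρ/(2τ*) + Ỹ(τ*)))²`. -/
theorem saddle_point_lambda_zero (δ ρ P : ℝ)
    (hδ : 1 < δ) (hρ : 0 < ρ) (hP : 0 < P)
    (βs τs : ℝ) (hsad : IsSaddle δ ρ P 0 βs τs) :
    (τs ^ 2 * δ - ρ =
        2 * P * (stdGaussian (Set.Ici (Real.sqrt P / τs))).toReal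
        + τs ^ 2 * ∫ h in Set.Icc (-(Real.sqrt P / τs)) (Real.sqrt P / τs),
            h ^ 2 ∂stdGaussian) ∧
    (∀ τ : ℝ, 0 < τ →
      τ ^ 2 * δ - ρ =
          2 * P * (stdGaussian (Set.Ici (Real.sqrt P / τ))).toReal
          + τ ^ 2 * ∫ h in Set.Icc (-(Real.sqrt P / τ)) (Real.sqrt P / τ),
              h ^ 2 ∂stdGaussian → τ = τs) ∧
    βs = max 0 (τs * δ + ρ / τs + 2 * Ytilde P τs) ∧
    Dfun δ ρ P 0 βs τs = (max 0 (τs * δ / 2 + ρ / (2 * τs) + Ytilde P τs)) ^ 2 := by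
  obtain ⟨-, hτs, hmax, hmin⟩ := hsad
  have hpos : 0 < saddleCoeff δ ρ P τs := saddleCoeff_pos hδ hρ.le hτs
  have hβs : βs = 2 * saddleCoeff δ ρ P τs :=
    eq_two_mul_of_forall_mul_sub_sq_le hpos.le fun β hβ => by
      simpa only [Dfun_lam_zero] using hmax β hβ
  have hlocal : IsLocalMin (saddleCoeff δ ρ P) τs := by
    filter_upwards [Ioi_mem_nhds hτs] with τ hτ
    have h := hmin τ hτ
    rw [Dfun_lam_zero, Dfun_lam_zero] at h
    exact le_of_mul_le_mul_left (by linarith) (by linarith : 0 < βs)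
  have hcrit : saddleCoeffDeriv δ ρ P τs = 0 :=
    hlocal.hasDerivAt_eq_zero (hasDerivAt_saddleCoeff hτs.ne')
  have htwice : τs * δ + ρ / τs + 2 * Ytilde P τs = 2 * saddleCoeff δ ρ P τs := by
    rw [saddleCoeff]; field_simp
  refine ⟨(fixedPoint_iff_saddleCoeffDeriv_eq_zero hP.le hτs).2 hcrit, fun τ hτ hfixed => ?_, ?_, ?_⟩
  · exact (strictMonoOn_saddleCoeffDeriv hρ).injOn hτ hτs
      (((fixedPoint_iff_saddleCoeffDeriv_eq_zero hP.le hτ).1 hfixed).trans hcrit.symm)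
  · rw [htwice, max_eq_right (by positivity), hβs]
  · rw [← saddleCoeff, max_eq_right hpos.le, Dfun_lam_zero, hβs]
    ring
end
end

section
/- Assume λ ≥ 0, ρ > 0 and P > 0, and for each δ > 1 let (β*(δ), τ*(δ)) be the unique saddle point of max_{β ≥ 0} min_{τ > 0} D(β,τ) with parameter δ. Then, as δ → ∞, the ratio τ*(δ)/√(ρ/δ) converges to 1 and the ratio β*(δ)/(2√(ρδ)) converges to 1. -/
/-!
For `β > 0`, `D(β, τ) = β φ(τ) - β²/4 + Y(β, τ)` with `φ(τ) = τδ/2 + ρ/(2τ)`. By AM–GM,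
`φ ≥ √(ρδ)` with equality exactly at `τ = √(ρ/δ)`, and a Gaussian tail estimate gives
`-Cβ ≤ Y ≤ 0` with `C` independent of `δ`, `β` and `τ`. So `D` is within `Cβ` of
`β φ(τ) - β²/4`, whose saddle point is `(2√(ρδ), √(ρ/δ))`. Comparing the saddle value of `D` with
`D(2√(ρδ), τ*)` and `D(β*, √(ρ/δ))` shows that both ratios differ from `1` by `O((ρδ)^(-1/4))`.
-/

open MeasureTheory ProbabilityTheory Filter

open Real Set

lemma integrable_id_stdGaussian : Integrable (fun x : ℝ => x) stdGaussian :=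
  memLp_one_iff_integrable.1 (memLp_id_gaussianReal (μ := 0) (v := 1) 1)

lemma integrable_sq_stdGaussian : Integrable (fun x : ℝ => x ^ 2) stdGaussian :=
  (memLp_id_gaussianReal (μ := 0) (v := 1) 2).integrable_sq

lemma integrable_sub_sq_stdGaussian (a : ℝ) : Integrable (fun x : ℝ => (x - a) ^ 2) stdGaussian :=
  ((memLp_id_gaussianReal (μ := 0) (v := 1) 2).sub (memLp_const a)).integrable_sq

lemma integral_sq_stdGaussian : ∫ x, x ^ 2 ∂stdGaussian = 1 := by
  rw [_root_.stdGaussian, ← variance_of_integral_eq_zero aemeasurable_id' integral_id_gaussianReal]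
  exact variance_fun_id_gaussianReal

lemma setIntegral_Ici_zero_sq_stdGaussian : ∫ x in Ici 0, x ^ 2 ∂stdGaussian = 1 / 2 := by
  have hsymm : ∫ x in Iic 0, x ^ 2 ∂stdGaussian = ∫ x in Ici 0, x ^ 2 ∂stdGaussian := by
    have hmap : (_root_.stdGaussian).map (fun x => -x) = _root_.stdGaussian := by
      rw [_root_.stdGaussian, gaussianReal_map_neg, neg_zero]
    conv_rhs => rw [← hmap]
    rw [setIntegral_map measurableSet_Ici (by fun_prop) (by fun_prop),
      show (fun x : ℝ => -x) ⁻¹' Ici 0 = Iic 0 by ext; simp]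
    simp only [neg_sq]
  have hsplit := integral_add_compl (measurableSet_Ici (a := (0:ℝ))) integrable_sq_stdGaussian
  rw [compl_Ici, integral_sq_stdGaussian,
    setIntegral_congr_set (Iio_ae_eq_Iic' (μ := stdGaussian) ?_), hsymm] at hsplit
  · linarith
  · exact (gaussianReal_absolutelyContinuous 0 one_ne_zero) (by simp)

lemma setIntegral_Ici_sub_sq_stdGaussian_le {a : ℝ} (ha : 0 ≤ a) :
    ∫ x in Ici a, (x - a) ^ 2 ∂stdGaussian ≤ 1 / 2 := by
  calc ∫ x in Ici a, (x - a) ^ 2 ∂stdGaussian ≤ ∫ x in Ici a, x ^ 2 ∂stdGaussian := by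
        refine setIntegral_mono_on (integrable_sub_sq_stdGaussian a).integrableOn
          integrable_sq_stdGaussian.integrableOn measurableSet_Ici fun x (hx : a ≤ x) => ?_
        nlinarith
    _ ≤ ∫ x in Ici 0, x ^ 2 ∂stdGaussian :=
        setIntegral_mono_set integrable_sq_stdGaussian.integrableOn
          (.of_forall fun x => sq_nonneg x) (Ici_subset_Ici.2 ha).eventuallyLE
    _ = 1 / 2 := setIntegral_Ici_zero_sq_stdGaussian

/-- On `x ≥ a` use `(x - a)² ≥ x² - 2ax`; on `0 ≤ x < a` the right side is negative. -/
lemma half_sub_le_setIntegral_Ici_sub_sq_stdGaussian {a : ℝ} (ha : 0 ≤ a) :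
    1 / 2 - 2 * a * ∫ x in Ici 0, x ∂stdGaussian ≤ ∫ x in Ici a, (x - a) ^ 2 ∂stdGaussian := by
  have hint : Integrable (fun x : ℝ => x ^ 2 - 2 * a * x) stdGaussian :=
    integrable_sq_stdGaussian.sub (integrable_id_stdGaussian.const_mul (2 * a))
  calc 1 / 2 - 2 * a * ∫ x in Ici 0, x ∂stdGaussian
      = ∫ x in Ici 0, (x ^ 2 - 2 * a * x) ∂stdGaussian := by
        rw [integral_sub integrable_sq_stdGaussian.integrableOn
          (integrable_id_stdGaussian.const_mul (2 * a)).integrableOn, integral_const_mul,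
          setIntegral_Ici_zero_sq_stdGaussian]
    _ = ∫ x, (Ici 0).indicator (fun x => x ^ 2 - 2 * a * x) x ∂stdGaussian :=
        (integral_indicator measurableSet_Ici).symm
    _ ≤ ∫ x, (Ici a).indicator (fun x => (x - a) ^ 2) x ∂stdGaussian := by
        refine integral_mono (hint.indicator measurableSet_Ici) ?_ fun x => ?_
        · exact (integrable_sub_sq_stdGaussian a).indicator measurableSet_Ici
        · by_cases hxa : a ≤ x
          · have hx0 : 0 ≤ x := ha.trans hxa
            simp only [indicator_of_mem (mem_Ici.2 hxa), indicator_of_mem (mem_Ici.2 hx0)]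
            nlinarith
          · rw [indicator_of_notMem (mt mem_Ici.1 hxa)]
            by_cases hx0 : 0 ≤ x
            · rw [indicator_of_mem (mem_Ici.2 hx0)]
              nlinarith
            · rw [indicator_of_notMem (mt mem_Ici.1 hx0)]
    _ = ∫ x in Ici a, (x - a) ^ 2 ∂stdGaussian := integral_indicator measurableSet_Ici

lemma Yfun_nonpos {P lam β τ : ℝ} (hlam : 0 ≤ lam) (hβ : 0 < β) (hτ : 0 < τ) :
    Yfun P lam β τ ≤ 0 := by
  have hα : 0 < 1 / τ + 2 * lam / β := by positivity
  have htail :=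
    setIntegral_Ici_sub_sq_stdGaussian_le (by positivity : 0 ≤ √P * (1 / τ + 2 * lam / β))
  exact mul_nonpos_of_nonneg_of_nonpos (by positivity) (by linarith)

noncomputable def ySlope (P : ℝ) : ℝ := 2 * √P * ∫ x in Ici 0, x ∂stdGaussian

lemma ySlope_nonneg (P : ℝ) : 0 ≤ ySlope P :=
  mul_nonneg (by positivity) (setIntegral_nonneg measurableSet_Ici fun _ hx => hx)

lemma neg_ySlope_mul_le_Yfun {P lam β τ : ℝ} (hlam : 0 ≤ lam) (hβ : 0 < β) (hτ : 0 < τ) :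
    -ySlope P * β ≤ Yfun P lam β τ := by
  set α := 1 / τ + 2 * lam / β
  have hα : 0 < α := by positivity
  have htail := half_sub_le_setIntegral_Ici_sub_sq_stdGaussian (by positivity : 0 ≤ √P * α)
  calc -ySlope P * β
      = β / α * (1 / 2 - 2 * (√P * α) * (∫ x in Ici 0, x ∂stdGaussian) - 1 / 2) := by
        rw [ySlope]
        field_simp
        ring
    _ ≤ Yfun P lam β τ := mul_le_mul_of_nonneg_left (by linarith) (by positivity)

noncomputable def phi (δ ρ τ : ℝ) : ℝ := τ * δ / 2 + ρ / (2 * τ)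

lemma phi_sub_sqrt {δ ρ τ : ℝ} (hδ : 0 < δ) (hρ : 0 < ρ) (hτ : 0 < τ) :
    phi δ ρ τ - √(ρ * δ) =
      √(ρ * δ) * (τ / √(ρ / δ) - 1) ^ 2 / (2 * (τ / √(ρ / δ))) := by
  set t := √(ρ / δ) with ht_def
  have ht : 0 < t := by positivity
  have hρt : ρ = t ^ 2 * δ := by
    rw [ht_def, Real.sq_sqrt (by positivity)]; field_simp
  have hs : √(ρ * δ) = t * δ := by
    rw [hρt, show t ^ 2 * δ * δ = (t * δ) ^ 2 by ring]
    exact Real.sqrt_sq (by positivity)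
  clear_value t
  subst hρt
  rw [hs, phi]
  field_simp
  ring

lemma Dfun_of_pos {δ ρ P lam β τ : ℝ} (hβ : 0 < β) :
    Dfun δ ρ P lam β τ = β * phi δ ρ τ - β ^ 2 / 4 + Yfun P lam β τ := by
  rw [Dfun, if_neg hβ.ne', phi]
  ring

/-- Compare `F(β₀, τ₀)` with `F(2s, τ₀)` from below and with `F(β₀, t)` from above. -/
lemma phi_le_add_and_sq_sub_le_of_saddle {F : ℝ → ℝ → ℝ} {φ : ℝ → ℝ} {s t C β₀ τ₀ : ℝ}
    (hC : 0 ≤ C) (hs : 2 * C < s) (ht : 0 < t) (hφ : ∀ τ, 0 < τ → s ≤ φ τ) (hφt : φ t = s)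
    (hF : ∀ β τ, 0 < β → 0 < τ →
      β * φ τ - β ^ 2 / 4 - C * β ≤ F β τ ∧ F β τ ≤ β * φ τ - β ^ 2 / 4)
    (hF0 : F 0 τ₀ = 0) (hβ₀ : 0 ≤ β₀) (hτ₀ : 0 < τ₀)
    (hmax : ∀ β, 0 ≤ β → F β τ₀ ≤ F β₀ τ₀) (hmin : ∀ τ, 0 < τ → F β₀ τ₀ ≤ F β₀ τ) :
    φ τ₀ ≤ s + C ∧ (β₀ / 2 - φ τ₀) ^ 2 ≤ C ^ 2 + 2 * C * s := by
  have hs0 : 0 < s := by linarith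
  have hφτ₀ := hφ τ₀ hτ₀
  have hlower : 2 * s * φ τ₀ - s ^ 2 - 2 * C * s ≤ F β₀ τ₀ := by
    have := (hF (2 * s) τ₀ (by positivity) hτ₀).1
    linarith [hmax (2 * s) (by positivity)]
  have hβ₀pos : 0 < β₀ := by
    refine hβ₀.lt_of_ne fun h => ?_
    rw [← h, hF0] at hlower
    nlinarith
  have hupper : F β₀ τ₀ ≤ β₀ * s - β₀ ^ 2 / 4 := by
    have := (hF β₀ t hβ₀pos ht).2
    rw [hφt] at this
    linarith [hmin t ht]
  have hφ_le : φ τ₀ ≤ s + C := by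
    have := (hF β₀ τ₀ hβ₀pos hτ₀).1
    nlinarith
  refine ⟨hφ_le, ?_⟩
  have := (hF β₀ τ₀ hβ₀pos hτ₀).2
  nlinarith

lemma abs_sub_one_le_of_sq_sub_one_le {ε r : ℝ} (hε : 0 ≤ ε) (h : (r - 1) ^ 2 ≤ ε * r) :
    |r - 1| ≤ √ε + ε := by
  have hsq := Real.sq_sqrt hε
  have hx : (r - 1) ^ 2 ≤ ε * |r - 1| + ε := by nlinarith [le_abs_self (r - 1)]
  by_contra! hlt
  have hx' : √ε ≤ |r - 1| := by linarith [Real.sqrt_nonneg ε]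
  have hpos : 0 < |r - 1| := by linarith [Real.sqrt_nonneg ε]
  nlinarith [sq_abs (r - 1), mul_le_mul_of_nonneg_left hx' (Real.sqrt_nonneg ε),
    mul_lt_mul_of_pos_right hlt hpos]

lemma abs_sub_one_le_of_sq_sub_le {ε b v : ℝ} (hε : 0 ≤ ε) (hv : 1 ≤ v) (hv' : v ≤ 1 + ε / 2)
    (h : (b - v) ^ 2 ≤ ε + ε ^ 2 / 4) : |b - 1| ≤ √ε + ε := by
  have hsq := Real.sq_sqrt hε
  have hbv : |b - v| ≤ √ε + ε / 2 :=
    abs_le_of_sq_le_sq (by nlinarith [Real.sqrt_nonneg ε]) (by positivity)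
  calc |b - 1| ≤ |b - v| + |v - 1| := abs_sub_le b v 1
    _ ≤ √ε + ε := by rw [abs_of_nonneg (by linarith : 0 ≤ v - 1)]; linarith

lemma IsSaddle.abs_sub_one_le {δ ρ P lam β₀ τ₀ : ℝ} (hδ : 0 < δ) (hρ : 0 < ρ) (hlam : 0 ≤ lam)
    (hs : 2 * ySlope P < √(ρ * δ)) (h : IsSaddle δ ρ P lam β₀ τ₀) :
    |τ₀ / √(ρ / δ) - 1| ≤ √(2 * ySlope P / √(ρ * δ)) + 2 * ySlope P / √(ρ * δ) ∧
    |β₀ / (2 * √(ρ * δ)) - 1| ≤ √(2 * ySlope P / √(ρ * δ)) + 2 * ySlope P / √(ρ * δ) := by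
  obtain ⟨hβ₀, hτ₀, hmax, hmin⟩ := h
  set C := ySlope P
  set s := √(ρ * δ)
  set t := √(ρ / δ)
  have hC : 0 ≤ C := ySlope_nonneg P
  have hs0 : 0 < s := by positivity
  have ht : 0 < t := by positivity
  have hε : 0 ≤ 2 * C / s := by positivity
  have hφ : ∀ τ, 0 < τ → s ≤ phi δ ρ τ := fun τ hτ => by
    have := phi_sub_sqrt hδ hρ hτ
    have : 0 ≤ s * (τ / t - 1) ^ 2 / (2 * (τ / t)) := by positivity
    linarith
  have hφt : phi δ ρ t = s := by
    have := phi_sub_sqrt hδ hρ ht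
    rwa [div_self ht.ne', sub_self, zero_pow two_ne_zero, mul_zero, zero_div, sub_eq_zero] at this
  have hF : ∀ β τ, 0 < β → 0 < τ →
      β * phi δ ρ τ - β ^ 2 / 4 - C * β ≤ Dfun δ ρ P lam β τ ∧
        Dfun δ ρ P lam β τ ≤ β * phi δ ρ τ - β ^ 2 / 4 := fun β τ hβ hτ => by
    rw [Dfun_of_pos hβ]
    have hY := Yfun_nonpos (P := P) hlam hβ hτ
    have hY' := neg_ySlope_mul_le_Yfun (P := P) hlam hβ hτ
    constructor <;> linarith
  obtain ⟨hφ_le, hsq⟩ := phi_le_add_and_sq_sub_le_of_saddle hC hs ht hφ hφt hF (if_pos rfl)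
    hβ₀ hτ₀ hmax hmin
  constructor
  · apply abs_sub_one_le_of_sq_sub_one_le hε
    have hr : 0 < τ₀ / t := by positivity
    have := phi_sub_sqrt hδ hρ hτ₀
    rw [div_mul_eq_mul_div, le_div_iff₀ hs0]
    rw [eq_div_iff (by positivity)] at this
    nlinarith
  · refine abs_sub_one_le_of_sq_sub_le hε (v := phi δ ρ τ₀ / s) ?_ ?_ ?_
    · rw [le_div_iff₀ hs0]; linarith [hφ τ₀ hτ₀]
    · rw [div_le_iff₀ hs0]; field_simp; linarith
    · calc (β₀ / (2 * s) - phi δ ρ τ₀ / s) ^ 2 = (β₀ / 2 - phi δ ρ τ₀) ^ 2 / s ^ 2 := by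
            field_simp
        _ ≤ (C ^ 2 + 2 * C * s) / s ^ 2 := by gcongr
        _ = 2 * C / s + (2 * C / s) ^ 2 / 4 := by field_simp; ring

theorem saddle_point_limit_delta_infty_general (ρ P lam : ℝ)
    (hρ : 0 < ρ) (hlam : 0 ≤ lam)
    (βs τs : ℝ → ℝ)
    (hsad : ∀ δ : ℝ, 1 < δ → IsSaddle δ ρ P lam (βs δ) (τs δ)) :
    Tendsto (fun δ => τs δ / Real.sqrt (ρ / δ)) atTop (nhds 1) ∧
    Tendsto (fun δ => βs δ / (2 * Real.sqrt (ρ * δ))) atTop (nhds 1) := by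
  have hs : Tendsto (fun δ => √(ρ * δ)) atTop atTop :=
    tendsto_sqrt_atTop.comp (tendsto_id.const_mul_atTop hρ)
  have hε : Tendsto (fun δ => 2 * ySlope P / √(ρ * δ)) atTop (nhds 0) :=
    tendsto_const_nhds.div_atTop hs
  have hbound : Tendsto (fun δ => √(2 * ySlope P / √(ρ * δ)) + 2 * ySlope P / √(ρ * δ))
      atTop (nhds 0) := by
    simpa using hε.sqrt.add hε
  have hest : ∀ᶠ δ in atTop, _ := ((eventually_gt_atTop 1).and
    (hs.eventually_gt_atTop (2 * ySlope P))).mono fun δ hδ =>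
      (hsad δ hδ.1).abs_sub_one_le (by linarith [hδ.1]) hρ hlam hδ.2
  constructor <;> rw [← tendsto_sub_nhds_zero_iff] <;> refine squeeze_zero_norm' ?_ hbound
  · exact hest.mono fun δ h => h.1
  · exact hest.mono fun δ h => h.2

/-- for `λ ≥ 0`, as `δ → ∞`, `τ*(δ)/√(ρ/δ) → 1` and `β*(δ)/(2√(ρδ)) → 1`. -/
theorem saddle_point_limit_delta_infty (ρ P lam : ℝ)
    (hρ : 0 < ρ) (hP : 0 < P) (hlam : 0 ≤ lam)
    (βs τs : ℝ → ℝ)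
    (hsad : ∀ δ : ℝ, 1 < δ → IsSaddle δ ρ P lam (βs δ) (τs δ)) :
    Tendsto (fun δ => τs δ / Real.sqrt (ρ / δ)) atTop (nhds 1) ∧
    Tendsto (fun δ => βs δ / (2 * Real.sqrt (ρ * δ))) atTop (nhds 1) :=
  saddle_point_limit_delta_infty_general ρ P lam hρ hlam βs τs hsad
end

section
/- Assume λ = 0, δ > 1 and P > 0, and for each ρ > 0 let (β*(ρ), τ*(ρ)) be the unique saddle point of max_{β ≥ 0} min_{τ > 0} D(β,τ) with parameter ρ. Then, as ρ → 0⁺, the ratio τ*(ρ)/(√ρ/√(δ − 1)) converges to 1 and the ratio β*(ρ)/(2√ρ·√(δ − 1)) converges to 1. -/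
open MeasureTheory ProbabilityTheory Filter

/-!
For `λ = 0` the objective factors as `D(β,τ) = β·F(τ) − β²/4` with
`F(τ) = τ(δ−1)/2 + ρ/(2τ) + τ·G(√P/τ)` and `G(a) = E[(H − a)₊²]`, so at the saddle point
`β* = 2F(τ*)` and `τ*` minimises `F`. Writing `τ₀ = √ρ/√(δ−1)` and `x = τ/τ₀`, the first two
terms of `F` are `√ρ√(δ−1)·(x + 1/x)/2`, while `F(τ₀) = √ρ√(δ−1)·(1 + G(√P/τ₀)/(δ−1))`.
As `ρ → 0⁺` the threshold `√P/τ₀` tends to infinity, where `G` vanishes; hence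
`x + 1/x → 2` at `τ*` and `F(τ*)/(√ρ√(δ−1)) → 1`.
-/

open Real Topology

instance : IsProbabilityMeasure stdGaussian :=
  inferInstanceAs (IsProbabilityMeasure (gaussianReal 0 1))

lemma integrable_abs_pow_stdGaussian (n : ℕ) :
    Integrable (fun x : ℝ => |x| ^ n) stdGaussian := by
  show Integrable _ (gaussianReal 0 1)
  simpa only [id, Real.norm_eq_abs] using (memLp_id_gaussianReal n).integrable_norm_pow'

noncomputable def gaussianUpperPartialMoment (a : ℝ) : ℝ :=
  ∫ x in Set.Ici a, (x - a) ^ 2 ∂stdGaussian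

lemma gaussianUpperPartialMoment_nonneg (a : ℝ) : 0 ≤ gaussianUpperPartialMoment a :=
  setIntegral_nonneg measurableSet_Ici fun _ _ => sq_nonneg _

lemma gaussianUpperPartialMoment_le {a : ℝ} (ha : 0 < a) :
    gaussianUpperPartialMoment a ≤ (∫ x, |x| ^ 3 ∂stdGaussian) / a := by
  have hsq : Integrable (fun x : ℝ => (x - a) ^ 2) stdGaussian :=
    ((memLp_id_gaussianReal 2 : MemLp id 2 stdGaussian).sub (memLp_const a)).integrable_sq
  -- on `[a, ∞)` with `a > 0`: `(x − a)² ≤ x² ≤ x³/a`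
  calc gaussianUpperPartialMoment a
      ≤ ∫ x in Set.Ici a, |x| ^ 3 / a ∂stdGaussian := by
        refine setIntegral_mono_on hsq.integrableOn
          ((integrable_abs_pow_stdGaussian 3).div_const a).integrableOn measurableSet_Ici ?_
        intro x (hx : a ≤ x)
        rw [abs_of_pos (ha.trans_le hx), le_div_iff₀ ha]
        nlinarith [mul_le_mul_of_nonneg_left hx (sq_nonneg x)]
    _ ≤ (∫ x, |x| ^ 3 ∂stdGaussian) / a := by
        rw [integral_div]
        refine div_le_div_of_nonneg_right ?_ ha.le
        exact setIntegral_le_integral (integrable_abs_pow_stdGaussian 3)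
          (ae_of_all _ fun x => by positivity)

lemma tendsto_gaussianUpperPartialMoment_atTop :
    Tendsto gaussianUpperPartialMoment atTop (𝓝 0) :=
  tendsto_of_tendsto_of_tendsto_of_le_of_le' tendsto_const_nhds
    (tendsto_const_nhds.div_atTop tendsto_id)
    (Eventually.of_forall gaussianUpperPartialMoment_nonneg)
    (eventually_gt_atTop 0 |>.mono fun _ => gaussianUpperPartialMoment_le)

noncomputable def Ffun (δ ρ P τ : ℝ) : ℝ :=
  τ * (δ - 1) / 2 + ρ / (2 * τ) + τ * gaussianUpperPartialMoment (√P / τ)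

lemma Dfun_eq_mul_Ffun {δ ρ P β : ℝ} (τ : ℝ) (hβ : β ≠ 0) :
    Dfun δ ρ P 0 β τ = β * Ffun δ ρ P τ - β ^ 2 / 4 := by
  simp only [Dfun, Yfun, Ffun, gaussianUpperPartialMoment, if_neg hβ, mul_zero, zero_div,
    add_zero, mul_one_div, div_div_eq_mul_div, div_one]
  ring

lemma Ffun_pos {δ ρ τ : ℝ} (P : ℝ) (hδ : 1 ≤ δ) (hρ : 0 < ρ) (hτ : 0 < τ) :
    0 < Ffun δ ρ P τ := by
  have := gaussianUpperPartialMoment_nonneg (√P / τ)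
  have : 0 ≤ δ - 1 := by linarith
  unfold Ffun
  positivity

lemma two_le_add_inv_self {x : ℝ} (hx : 0 < x) : 2 ≤ x + x⁻¹ := by
  have : x + x⁻¹ - 2 = (x - 1) ^ 2 / x := by field_simp; ring
  linarith [show 0 ≤ (x - 1) ^ 2 / x by positivity]

section Saddle

variable {δ ρ P : ℝ}

lemma Ffun_eq (P : ℝ) (hδ : 1 < δ) (hρ : 0 < ρ) {τ : ℝ} (hτ : 0 < τ) :
    Ffun δ ρ P τ = √ρ * √(δ - 1) * ((τ / (√ρ / √(δ - 1)) + (τ / (√ρ / √(δ - 1)))⁻¹) / 2)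
      + τ * gaussianUpperPartialMoment (√P / τ) := by
  have hd : 0 < δ - 1 := by linarith
  have hsρ : 0 < √ρ := sqrt_pos.2 hρ
  have hsd : 0 < √(δ - 1) := sqrt_pos.2 hd
  unfold Ffun
  field_simp
  linear_combination (-τ ^ 2) * sq_sqrt hd.le - sq_sqrt hρ.le

lemma Ffun_sqrt_div_sqrt (P : ℝ) (hδ : 1 < δ) (hρ : 0 < ρ) :
    Ffun δ ρ P (√ρ / √(δ - 1)) = √ρ * √(δ - 1) *
      (1 + gaussianUpperPartialMoment (√P / (√ρ / √(δ - 1))) / (δ - 1)) := by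
  have hd : 0 < δ - 1 := by linarith
  have hsρ : 0 < √ρ := sqrt_pos.2 hρ
  have hsd : 0 < √(δ - 1) := sqrt_pos.2 hd
  rw [Ffun_eq P hδ hρ (by positivity), div_self (by positivity), inv_one]
  set G := gaussianUpperPartialMoment (√P / (√ρ / √(δ - 1)))
  field_simp
  linear_combination (-2 * G) * sq_sqrt hd.le

lemma mul_add_inv_le_Ffun (P : ℝ) (hδ : 1 < δ) (hρ : 0 < ρ) {τ : ℝ} (hτ : 0 < τ) :
    √ρ * √(δ - 1) * ((τ / (√ρ / √(δ - 1)) + (τ / (√ρ / √(δ - 1)))⁻¹) / 2) ≤ Ffun δ ρ P τ := by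
  rw [Ffun_eq P hδ hρ hτ]
  linarith [mul_nonneg hτ.le (gaussianUpperPartialMoment_nonneg (√P / τ))]

lemma IsSaddle.eq_two_mul_Ffun {βs τs : ℝ} (h : IsSaddle δ ρ P 0 βs τs)
    (hF : 0 < Ffun δ ρ P τs) : βs = 2 * Ffun δ ρ P τs := by
  set F := Ffun δ ρ P τs
  have hmax := h.2.2.1 (2 * F) (by positivity)
  rw [Dfun_eq_mul_Ffun τs (by positivity)] at hmax
  have hβ : βs ≠ 0 := by
    rintro rfl
    simp only [Dfun, if_true] at hmax
    nlinarith
  rw [Dfun_eq_mul_Ffun τs hβ] at hmax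
  nlinarith [sq_nonneg (βs - 2 * F)]

lemma IsSaddle.Ffun_le {βs τs : ℝ} (h : IsSaddle δ ρ P 0 βs τs) (hβ : 0 < βs)
    {τ : ℝ} (hτ : 0 < τ) : Ffun δ ρ P τs ≤ Ffun δ ρ P τ := by
  have hmin := h.2.2.2 τ hτ
  rw [Dfun_eq_mul_Ffun τs hβ.ne', Dfun_eq_mul_Ffun τ hβ.ne'] at hmin
  exact le_of_mul_le_mul_left (by linarith) hβ

lemma IsSaddle.Ffun_le_Ffun_sqrt_div_sqrt {βs τs : ℝ} (hδ : 1 < δ) (hρ : 0 < ρ)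
    (h : IsSaddle δ ρ P 0 βs τs) :
    Ffun δ ρ P τs ≤ √ρ * √(δ - 1) *
      (1 + gaussianUpperPartialMoment (√P / (√ρ / √(δ - 1))) / (δ - 1)) := by
  have hF := Ffun_pos P hδ.le hρ h.2.1
  have hβ : 0 < βs := by rw [h.eq_two_mul_Ffun hF]; positivity
  have hτ₀ : 0 < √ρ / √(δ - 1) := div_pos (sqrt_pos.2 hρ) (sqrt_pos.2 (sub_pos.2 hδ))
  exact (h.Ffun_le hβ hτ₀).trans_eq (Ffun_sqrt_div_sqrt P hδ hρ)

lemma IsSaddle.add_inv_le {βs τs : ℝ} (hδ : 1 < δ) (hρ : 0 < ρ) (h : IsSaddle δ ρ P 0 βs τs) :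
    τs / (√ρ / √(δ - 1)) + (τs / (√ρ / √(δ - 1)))⁻¹ ≤
      2 + 2 * (gaussianUpperPartialMoment (√P / (√ρ / √(δ - 1))) / (δ - 1)) := by
  have hc : 0 < √ρ * √(δ - 1) := mul_pos (sqrt_pos.2 hρ) (sqrt_pos.2 (sub_pos.2 hδ))
  have := le_of_mul_le_mul_left ((mul_add_inv_le_Ffun P hδ hρ h.2.1).trans
    (h.Ffun_le_Ffun_sqrt_div_sqrt hδ hρ)) hc
  linarith

lemma IsSaddle.div_mem_Icc {βs τs : ℝ} (hδ : 1 < δ) (hρ : 0 < ρ) (h : IsSaddle δ ρ P 0 βs τs) :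
    βs / (2 * √ρ * √(δ - 1)) ∈
      Set.Icc 1 (1 + gaussianUpperPartialMoment (√P / (√ρ / √(δ - 1))) / (δ - 1)) := by
  have hc : 0 < √ρ * √(δ - 1) := mul_pos (sqrt_pos.2 hρ) (sqrt_pos.2 (sub_pos.2 hδ))
  have hβ : βs / (2 * √ρ * √(δ - 1)) = Ffun δ ρ P τs / (√ρ * √(δ - 1)) := by
    rw [h.eq_two_mul_Ffun (Ffun_pos P hδ.le hρ h.2.1), mul_assoc, mul_div_mul_left _ _ two_ne_zero]
  have hlower : √ρ * √(δ - 1) ≤ Ffun δ ρ P τs := by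
    refine le_trans ?_ (mul_add_inv_le_Ffun P hδ hρ h.2.1)
    have := two_le_add_inv_self
      (div_pos h.2.1 (div_pos (sqrt_pos.2 hρ) (sqrt_pos.2 (sub_pos.2 hδ))))
    nlinarith
  rw [hβ, Set.mem_Icc, le_div_iff₀ hc, div_le_iff₀ hc]
  exact ⟨by linarith, by linarith [h.Ffun_le_Ffun_sqrt_div_sqrt hδ hρ]⟩

end Saddle

lemma tendsto_one_of_add_inv_le {α : Type*} {l : Filter α} {x e : α → ℝ}
    (hx : ∀ᶠ a in l, 0 < x a) (hle : ∀ᶠ a in l, x a + (x a)⁻¹ ≤ 2 + e a)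
    (he : Tendsto e l (𝓝 0)) : Tendsto x l (𝓝 1) := by
  have hbound : ∀ᶠ a in l, ‖x a - 1‖ ≤ √(e a * (2 + e a)) := by
    filter_upwards [hx, hle] with a hxa hlea
    have hinv : x a * (x a)⁻¹ = 1 := mul_inv_cancel₀ hxa.ne'
    have he_nonneg : 0 ≤ e a := by linarith [two_le_add_inv_self hxa]
    have hx_le : x a ≤ 2 + e a := by linarith [inv_pos.2 hxa]
    -- multiplying `x + x⁻¹ - 2 ≤ e` by `x` gives `(x - 1)² ≤ e x`
    have hsq : (x a - 1) ^ 2 ≤ e a * x a := by nlinarith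
    rw [Real.norm_eq_abs, ← sqrt_sq_eq_abs]
    exact sqrt_le_sqrt (hsq.trans (mul_le_mul_of_nonneg_left hx_le he_nonneg))
  have hlim : Tendsto (fun a => √(e a * (2 + e a))) l (𝓝 0) := by
    simpa using (he.mul (he.const_add 2)).sqrt
  rw [tendsto_iff_norm_sub_tendsto_zero]
  exact squeeze_zero' (Eventually.of_forall fun _ => norm_nonneg _) hbound hlim

lemma tendsto_div_sqrt_nhdsGT_zero {c : ℝ} (hc : 0 < c) :
    Tendsto (fun ρ => c / √ρ) (𝓝[>] 0) atTop := by
  have hsqrt : Tendsto (fun ρ : ℝ => √ρ) (𝓝[>] 0) (𝓝[>] 0) :=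
    tendsto_nhdsWithin_iff.2 ⟨(continuous_sqrt.tendsto' 0 0 sqrt_zero).mono_left nhdsWithin_le_nhds,
      eventually_mem_nhdsWithin.mono fun _ => sqrt_pos.2⟩
  exact (tendsto_inv_nhdsGT_zero.comp hsqrt).const_mul_atTop hc

/-- for `λ = 0` and `δ > 1`, as `ρ → 0⁺`, `τ*(ρ)/(√ρ/√(δ−1)) → 1` and
`β*(ρ)/(2√ρ·√(δ−1)) → 1`. -/
theorem saddle_point_limit_rho_zero_ZF (δ P : ℝ)
    (hδ : 1 < δ) (hP : 0 < P)
    (βs τs : ℝ → ℝ)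
    (hsad : ∀ ρ : ℝ, 0 < ρ → IsSaddle δ ρ P 0 (βs ρ) (τs ρ)) :
    Tendsto (fun ρ => τs ρ / (Real.sqrt ρ / Real.sqrt (δ - 1)))
      (nhdsWithin 0 (Set.Ioi 0)) (nhds 1) ∧
    Tendsto (fun ρ => βs ρ / (2 * Real.sqrt ρ * Real.sqrt (δ - 1)))
      (nhdsWithin 0 (Set.Ioi 0)) (nhds 1) := by
  set e := fun ρ => gaussianUpperPartialMoment (√P / (√ρ / √(δ - 1))) / (δ - 1)
  have hthreshold : Tendsto (fun ρ => √P / (√ρ / √(δ - 1))) (𝓝[>] 0) atTop := by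
    simpa only [div_div_eq_mul_div] using
      tendsto_div_sqrt_nhdsGT_zero (mul_pos (sqrt_pos.2 hP) (sqrt_pos.2 (sub_pos.2 hδ)))
  have he : Tendsto e (𝓝[>] 0) (𝓝 0) := by
    simpa using (tendsto_gaussianUpperPartialMoment_atTop.comp hthreshold).div_const (δ - 1)
  have hpos : ∀ᶠ ρ : ℝ in 𝓝[>] 0, 0 < ρ := self_mem_nhdsWithin
  refine ⟨tendsto_one_of_add_inv_le ?_ ?_ (by simpa using he.const_mul 2), ?_⟩
  · filter_upwards [hpos] with ρ hρ
    exact div_pos (hsad ρ hρ).2.1 (div_pos (sqrt_pos.2 hρ) (sqrt_pos.2 (sub_pos.2 hδ)))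
  · filter_upwards [hpos] with ρ hρ
    exact (hsad ρ hρ).add_inv_le hδ hρ
  · refine tendsto_of_tendsto_of_tendsto_of_le_of_le' tendsto_const_nhds
      (by simpa using he.const_add 1) ?_ ?_ <;> filter_upwards [hpos] with ρ hρ
    exacts [((hsad ρ hρ).div_mem_Icc hδ hρ).1, ((hsad ρ hρ).div_mem_Icc hδ hρ).2]
end

section
/- Let f : ℝⁿ → ℝ be a convex function, let x̄ ∈ ℝⁿ and r > 0, and assume f is γ-strongly convex on the closed ball B(x̄, r) for some γ > 0 (i.e., x ↦ f(x) − (γ/2)‖x‖² is convex on B(x̄, r)). Suppose f(x̄) ≤ min_{x ∈ B(x̄,r)} f(x) + ε for some ε with 0 ≤ ε < r²γ/8. Then: (1) f admits a unique global minimizer x* over ℝⁿ, and x* ∈ B(x̄, r) with ‖x* − x̄‖² ≤ (2/γ)·ε; (2) for every x ∈ ℝⁿ with ‖x − x̄‖² ≥ (8/γ)·ε, one has f(x) ≥ min_{y ∈ ℝⁿ} f(y) + ε. -/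
/-!
Strong convexity on the ball makes the minimiser `x*` of `f` over `B(x̄, r)` a point of quadratic
growth there: `f x ≥ f x* + γ/2 ‖x - x*‖²`. Evaluating at `x̄` puts `x*` within `√(2ε/γ) < r/2`
of `x̄`, so the ball of radius `ρ = r - ‖x* - x̄‖ > r/2` around `x*` lies in `B(x̄, r)`.
Convexity of `f` along rays from `x*` then propagates the growth to the whole space as
`f x ≥ f x* + γ/2 min(‖x - x*‖, ρ)²`, which gives global minimality, uniqueness and the
growth bound at once.
-/

open Metric Set Filter Topology

section NormedSpace

variable {E : Type*} [NormedAddCommGroup E] [NormedSpace ℝ E] {s : Set E} {f : E → ℝ} {x₀ x : E}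

lemma UniformConvexOn.add_le_of_isMinOn {φ : ℝ → ℝ} (hf : UniformConvexOn s φ f)
    (hmin : IsMinOn f s x₀) (hx₀ : x₀ ∈ s) (hx : x ∈ s) : f x₀ + φ ‖x - x₀‖ ≤ f x := by
  have hseg : ∀ t ∈ Ioo (0 : ℝ) 1, f x₀ + (1 - t) * φ ‖x - x₀‖ ≤ f x := by
    rintro t ⟨ht₀, ht₁⟩
    have hconv := hf.2 hx hx₀ ht₀.le (sub_nonneg.2 ht₁.le) (add_sub_cancel t 1)
    have hle : f x₀ ≤ f (t • x + (1 - t) • x₀) :=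
      hmin (hf.1 hx hx₀ ht₀.le (sub_nonneg.2 ht₁.le) (add_sub_cancel t 1))
    simp only [smul_eq_mul] at hconv
    nlinarith
  have hcont : Continuous fun t : ℝ ↦ f x₀ + (1 - t) * φ ‖x - x₀‖ := by fun_prop
  have hlim := (hcont.tendsto 0).mono_left (nhdsWithin_le_nhds (s := Ioi 0))
  simp only [sub_zero, one_mul] at hlim
  exact le_of_tendsto hlim (by filter_upwards [Ioo_mem_nhdsGT one_pos] using hseg)

lemma ConvexOn.add_min_le_of_forall_mem_closedBall {φ : ℝ → ℝ} {ρ : ℝ} (hf : ConvexOn ℝ s f)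
    (hx₀ : x₀ ∈ s) (hx : x ∈ s) (hρ : 0 < ρ) (hφρ : 0 ≤ φ ρ)
    (hgrowth : ∀ z ∈ closedBall x₀ ρ, f x₀ + φ ‖z - x₀‖ ≤ f z) :
    f x₀ + φ (min ‖x - x₀‖ ρ) ≤ f x := by
  rcases le_or_gt ‖x - x₀‖ ρ with hle | hlt
  · rw [min_eq_left hle]
    exact hgrowth x (mem_closedBall_iff_norm.2 hle)
  rw [min_eq_right hlt.le]
  have hd : 0 < ‖x - x₀‖ := hρ.trans hlt
  have ht : ρ / ‖x - x₀‖ ∈ Ioo (0 : ℝ) 1 := ⟨div_pos hρ hd, (div_lt_one hd).2 hlt⟩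
  set z := AffineMap.lineMap x₀ x (ρ / ‖x - x₀‖)
  have hz : ‖z - x₀‖ = ρ := by
    rw [← dist_eq_norm, dist_lineMap_left, Real.norm_of_nonneg ht.1.le, dist_eq_norm',
      div_mul_cancel₀ _ hd.ne']
  have hfz := hgrowth z (mem_closedBall_iff_norm.2 hz.le)
  rw [hz] at hfz
  have := hf.le_right_of_left_le hx₀ hx (lineMap_mem_openSegment ℝ x₀ x ht) (by linarith)
  linarith

end NormedSpace

theorem strong_convexity_localization_general {n : ℕ}
    (f : EuclideanSpace ℝ (Fin n) → ℝ)
    (hconv : ConvexOn ℝ Set.univ f)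
    (xbar : EuclideanSpace ℝ (Fin n)) (r γ ε : ℝ)
    (hr : 0 < r) (hγ : 0 < γ)
    (hstrong : ConvexOn ℝ (closedBall xbar r) (fun x => f x - (γ / 2) * ‖x‖ ^ 2))
    (hεlt : ε < r ^ 2 * γ / 8)
    (hmin : ∀ x ∈ closedBall xbar r, f xbar ≤ f x + ε) :
    ∃ xs : EuclideanSpace ℝ (Fin n),
      (∀ x, f xs ≤ f x) ∧
      (∀ x', (∀ x, f x' ≤ f x) → x' = xs) ∧
      xs ∈ closedBall xbar r ∧
      ‖xs - xbar‖ ^ 2 ≤ (2 / γ) * ε ∧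
      ∀ x, (8 / γ) * ε ≤ ‖x - xbar‖ ^ 2 → f xs + ε ≤ f x := by
  obtain ⟨xs, hxs, hxs_min⟩ := (isCompact_closedBall xbar r).exists_isMinOn
    (nonempty_closedBall.2 hr.le) ((hconv.continuousOn isOpen_univ).mono (subset_univ _))
  have hgrowth_ball : ∀ x ∈ closedBall xbar r, f xs + γ / 2 * ‖x - xs‖ ^ 2 ≤ f x :=
    fun x hx ↦ (strongConvexOn_iff_convex.2 hstrong).add_le_of_isMinOn hxs_min hxs hx
  have hxs_near : γ * ‖xs - xbar‖ ^ 2 ≤ 2 * ε := by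
    have := hgrowth_ball xbar (mem_closedBall_self hr.le)
    rw [norm_sub_rev] at this
    linarith [hmin xs hxs]
  have hxs_lt : ‖xs - xbar‖ < r / 2 :=
    lt_of_pow_lt_pow_left₀ 2 (by positivity) (by nlinarith)
  set ρ := r - ‖xs - xbar‖
  have hgrowth : ∀ x, f xs + γ / 2 * min ‖x - xs‖ ρ ^ 2 ≤ f x := fun x ↦
    hconv.add_min_le_of_forall_mem_closedBall (φ := fun d ↦ γ / 2 * d ^ 2) (mem_univ xs)
      (mem_univ x) (by linarith) (by positivity) fun z hz ↦ hgrowth_ball z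
        (closedBall_subset_closedBall' (by rw [dist_eq_norm]; linarith) hz)
  refine ⟨xs, fun x ↦ ?_, fun x' hx' ↦ ?_, hxs, ?_, fun x hx ↦ ?_⟩
  · nlinarith [hgrowth x]
  · by_contra hne
    have : 0 < min ‖x' - xs‖ ρ := lt_min (norm_pos_iff.2 (sub_ne_zero.2 hne)) (by linarith)
    linarith [hgrowth x', hx' xs, mul_pos (half_pos hγ) (pow_pos this 2)]
  · rw [div_mul_eq_mul_div, le_div_iff₀ hγ]
    linarith
  · rw [div_mul_eq_mul_div, div_le_iff₀ hγ] at hx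
    have hxs_half : 2 * ‖xs - xbar‖ ≤ ‖x - xbar‖ :=
      le_of_pow_le_pow_left₀ two_ne_zero (norm_nonneg _) (by nlinarith)
    have hx_xs : ‖x - xbar‖ / 2 ≤ ‖x - xs‖ := by
      linarith [norm_sub_le_norm_sub_add_norm_sub x xs xbar]
    have hε_le : ε ≤ γ / 2 * min ‖x - xs‖ ρ ^ 2 := by
      rcases min_cases ‖x - xs‖ ρ with ⟨hm, -⟩ | ⟨hm, -⟩ <;> rw [hm]
      · nlinarith [pow_le_pow_left₀ (by positivity) hx_xs 2]
      · nlinarith [pow_le_pow_left₀ (by positivity) (by linarith : r / 2 ≤ ρ) 2]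
    linarith [hgrowth x]

/-- local strong convexity lemma. If `f` is convex on `ℝⁿ`, γ-strongly convex
on the closed ball `B(x̄, r)`, and `f(x̄) ≤ min_{B(x̄,r)} f + ε` with `0 ≤ ε < r²γ/8`, then
`f` has a unique global minimizer `x*`, which lies in `B(x̄, r)` and satisfies
`‖x* − x̄‖² ≤ (2/γ)ε`; moreover `‖x − x̄‖² ≥ (8/γ)ε` implies `f(x) ≥ min f + ε`. -/
theorem strong_convexity_localization {n : ℕ}
    (f : EuclideanSpace ℝ (Fin n) → ℝ)
    (hconv : ConvexOn ℝ Set.univ f)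
    (xbar : EuclideanSpace ℝ (Fin n)) (r γ ε : ℝ)
    (hr : 0 < r) (hγ : 0 < γ)
    (hstrong : ConvexOn ℝ (closedBall xbar r) (fun x => f x - (γ / 2) * ‖x‖ ^ 2))
    (hε : 0 ≤ ε) (hεlt : ε < r ^ 2 * γ / 8)
    (hmin : ∀ x ∈ closedBall xbar r, f xbar ≤ f x + ε) :
    ∃ xs : EuclideanSpace ℝ (Fin n),
      (∀ x, f xs ≤ f x) ∧
      (∀ x', (∀ x, f x' ≤ f x) → x' = xs) ∧
      xs ∈ closedBall xbar r ∧
      ‖xs - xbar‖ ^ 2 ≤ (2 / γ) * ε ∧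
      ∀ x, (8 / γ) * ε ≤ ‖x - xbar‖ ^ 2 → f xs + ε ≤ f x :=
  strong_convexity_localization_general f hconv xbar r γ ε hr hγ hstrong hεlt hmin
end
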